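/- arXiv:0809.4405 — 6 statements merged into one kernel-verified Lean document; each statement's English description precedes it below -/
import Mathlib

section
/- Let X be a real random variable with E[e^{sX}] < ∞ for some s > 0, and let r ∈ (0, s). Then E[e^{rX}] < ∞, and the quantity h(r,s) defined by the equation E[e^{rX}] = e^{-h(r,s)} · E[e^{sX}]^{r/s} satisfies the identity h(r,s) = (1/s) · ∫₀^s min(r,q) · (s - max(r,q)) · Var_q(X) dq, where Var_q(X) = E[X² e^{qX}]/E[e^{qX}] - (E[X e^{qX}]/E[e^{qX}])² is the variance of X with respect to the weighted probability measure P_q(A) = E[χ_A e^{qX}]/E[e^{qX}]. -/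
/-! The cumulant generating function `Λ(q) = log E[e^{qX}]` has `Λ(0) = 0`, and on `(0, s)` its
derivative is the tilted mean and its second derivative is `Var_q(X) ≥ 0`. The identity is then
Green's formula for `d²/dq²` on `[a, b] = [0, s]` applied to `f = Λ`:
`(r - a) f(b) + (b - r) f(a) - (b - a) f(r) = ∫ₐᵇ (min(r,q) - a)(b - max(r,q)) f''(q) dq`.
Since `Λ'` may blow up at both endpoints, both halves of the integral are improper. They converge
because `f'' ≥ 0`, and convexity forces `(q - a) f'(q) → 0` and `(b - q) f'(q) → 0` at the
endpoints, so the antiderivatives `(q - a) f' - f` and `(b - q) f' + f` of the two halves extend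
continuously to the boundary. -/

open MeasureTheory ProbabilityTheory Real Set Filter Topology

section Green

variable {f f' f'' : ℝ → ℝ} {a b r : ℝ}

theorem ConvexOn.tendsto_sub_mul_deriv_nhdsGT (hconv : ConvexOn ℝ (Icc a b) f) (hab : a < b)
    (hfa : ContinuousWithinAt f (Icc a b) a) (hf' : ∀ t ∈ Ioo a b, HasDerivAt f (f' t) t) :
    Tendsto (fun t => (t - a) * f' t) (𝓝[>] a) (𝓝 0) := by
  have hlim : Tendsto f (𝓝[>] a) (𝓝 (f a)) := by
    rw [← nhdsWithin_Ioo_eq_nhdsGT hab]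
    exact hfa.mono Ioo_subset_Icc_self
  have hdouble : Tendsto (fun t => 2 * t - a) (𝓝[>] a) (𝓝[>] a) := by
    refine tendsto_nhdsWithin_of_tendsto_nhds_of_eventually_within _ ?_ ?_
    · exact (by fun_prop : Continuous fun t : ℝ => 2 * t - a).tendsto' a a (by ring)
        |>.mono_left nhdsWithin_le_nhds
    · filter_upwards [self_mem_nhdsWithin] with t (ht : a < t)
      show a < 2 * t - a
      linarith
  have hnear : ∀ᶠ t in 𝓝[>] a, t ∈ Ioo a ((a + b) / 2) := Ioo_mem_nhdsGT (by linarith)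
  have hlower : ∀ᶠ t in 𝓝[>] a, f t - f a ≤ (t - a) * f' t := by
    filter_upwards [hnear] with t ht
    have := hconv.slope_le_of_hasDerivAt (left_mem_Icc.2 hab.le) ⟨ht.1.le, by linarith [ht.2]⟩
      ht.1 (hf' t ⟨ht.1, by linarith [ht.2]⟩)
    rw [slope_def_field, div_le_iff₀ (sub_pos.2 ht.1)] at this
    linarith
  have hupper : ∀ᶠ t in 𝓝[>] a, (t - a) * f' t ≤ f (2 * t - a) - f t := by
    filter_upwards [hnear] with t ht
    have := hconv.le_slope_of_hasDerivAt ⟨ht.1.le, by linarith [ht.2]⟩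
      ⟨by linarith [ht.1], by linarith [ht.2]⟩ (by linarith [ht.1] : t < 2 * t - a)
      (hf' t ⟨ht.1, by linarith [ht.2]⟩)
    rw [slope_def_field, show 2 * t - a - t = t - a by ring, le_div_iff₀ (sub_pos.2 ht.1)] at this
    linarith
  exact tendsto_of_tendsto_of_tendsto_of_le_of_le' (by simpa using hlim.sub_const (f a))
    (by simpa using (hlim.comp hdouble).sub hlim) hlower hupper

theorem ConvexOn.tendsto_sub_mul_deriv_nhdsLT (hconv : ConvexOn ℝ (Icc a b) f) (hab : a < b)
    (hfb : ContinuousWithinAt f (Icc a b) b) (hf' : ∀ t ∈ Ioo a b, HasDerivAt f (f' t) t) :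
    Tendsto (fun t => (b - t) * f' t) (𝓝[<] b) (𝓝 0) := by
  have hlim : Tendsto f (𝓝[<] b) (𝓝 (f b)) := by
    rw [← nhdsWithin_Ioo_eq_nhdsLT hab]
    exact hfb.mono Ioo_subset_Icc_self
  have hdouble : Tendsto (fun t => 2 * t - b) (𝓝[<] b) (𝓝[<] b) := by
    refine tendsto_nhdsWithin_of_tendsto_nhds_of_eventually_within _ ?_ ?_
    · exact (by fun_prop : Continuous fun t : ℝ => 2 * t - b).tendsto' b b (by ring)
        |>.mono_left nhdsWithin_le_nhds
    · filter_upwards [self_mem_nhdsWithin] with t (ht : t < b)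
      show 2 * t - b < b
      linarith
  have hnear : ∀ᶠ t in 𝓝[<] b, t ∈ Ioo ((a + b) / 2) b := Ioo_mem_nhdsLT (by linarith)
  have hlower : ∀ᶠ t in 𝓝[<] b, f t - f (2 * t - b) ≤ (b - t) * f' t := by
    filter_upwards [hnear] with t ht
    have := hconv.slope_le_of_hasDerivAt ⟨by linarith [ht.1], by linarith [ht.2]⟩
      ⟨by linarith [ht.1], ht.2.le⟩ (by linarith [ht.2] : 2 * t - b < t)
      (hf' t ⟨by linarith [ht.1], ht.2⟩)
    rw [slope_def_field, show t - (2 * t - b) = b - t by ring, div_le_iff₀ (sub_pos.2 ht.2)] at this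
    linarith
  have hupper : ∀ᶠ t in 𝓝[<] b, (b - t) * f' t ≤ f b - f t := by
    filter_upwards [hnear] with t ht
    have := hconv.le_slope_of_hasDerivAt ⟨by linarith [ht.1], ht.2.le⟩ (right_mem_Icc.2 hab.le)
      ht.2 (hf' t ⟨by linarith [ht.1], ht.2⟩)
    rw [slope_def_field, le_div_iff₀ (sub_pos.2 ht.2)] at this
    linarith
  exact tendsto_of_tendsto_of_tendsto_of_le_of_le' (by simpa using hlim.sub (hlim.comp hdouble))
    (by simpa using hlim.const_sub (f b)) hlower hupper

theorem convexOn_Icc_of_hasDerivAt2_nonneg (hf : ContinuousOn f (Icc a b))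
    (hf' : ∀ t ∈ Ioo a b, HasDerivAt f (f' t) t) (hf'' : ∀ t ∈ Ioo a b, HasDerivAt f' (f'' t) t)
    (hf''_nonneg : ∀ t ∈ Ioo a b, 0 ≤ f'' t) : ConvexOn ℝ (Icc a b) f :=
  convexOn_of_hasDerivWithinAt2_nonneg (convex_Icc a b) hf
    (by rw [interior_Icc]; exact fun t ht => (hf' t ht).hasDerivWithinAt)
    (by rw [interior_Icc]; exact fun t ht => (hf'' t ht).hasDerivWithinAt)
    (by rw [interior_Icc]; exact hf''_nonneg)

theorem intervalIntegrable_and_integral_sub_left_mul_deriv2 (hf : ContinuousOn f (Icc a b))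
    (hf' : ∀ t ∈ Ioo a b, HasDerivAt f (f' t) t) (hf'' : ∀ t ∈ Ioo a b, HasDerivAt f' (f'' t) t)
    (hf''_nonneg : ∀ t ∈ Ioo a b, 0 ≤ f'' t) (hr : r ∈ Ioo a b) :
    IntervalIntegrable (fun t => (t - a) * f'' t) volume a r ∧
      ∫ t in a..r, (t - a) * f'' t = (r - a) * f' r - (f r - f a) := by
  set F := fun t => (t - a) * f' t - f t
  have hF' : ∀ t ∈ Ioo a b, HasDerivAt F ((t - a) * f'' t) t := fun t ht => by
    refine ((((hasDerivAt_id' t).sub_const a).mul (hf'' t ht)).sub (hf' t ht)).congr_deriv ?_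
    ring
  have hFa : Tendsto F (𝓝[>] a) (𝓝 (F a)) := by
    have hab : a < b := hr.1.trans hr.2
    have hfa := hf a (left_mem_Icc.2 hab.le)
    simpa [F] using ((convexOn_Icc_of_hasDerivAt2_nonneg hf hf' hf'' hf''_nonneg
      ).tendsto_sub_mul_deriv_nhdsGT hab hfa hf').sub
      (hfa.mono_of_mem_nhdsWithin (Icc_mem_nhdsGT hab))
  have hFc : ContinuousOn F (Icc a r) := by
    intro t ht
    rcases ht.1.eq_or_lt with rfl | hat
    · exact (continuousWithinAt_Ioi_iff_Ici.1 hFa).mono Icc_subset_Ici_self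
    · exact (hF' t ⟨hat, ht.2.trans_lt hr.2⟩).continuousAt.continuousWithinAt
  have hF'r : ∀ t ∈ Ioo a r, HasDerivAt F ((t - a) * f'' t) t :=
    fun t ht => hF' t ⟨ht.1, ht.2.trans hr.2⟩
  have hint : IntervalIntegrable (fun t => (t - a) * f'' t) volume a r :=
    (intervalIntegrable_iff_integrableOn_Ioc_of_le hr.1.le).2 <|
      intervalIntegral.integrableOn_deriv_of_nonneg hFc hF'r fun t ht =>
        mul_nonneg (sub_nonneg.2 ht.1.le) (hf''_nonneg t ⟨ht.1, ht.2.trans hr.2⟩)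
  refine ⟨hint, ?_⟩
  rw [intervalIntegral.integral_eq_sub_of_hasDerivAt_of_le hr.1.le hFc hF'r hint]
  simp only [F, sub_self, zero_mul, zero_sub, sub_neg_eq_add]
  ring

theorem intervalIntegrable_and_integral_sub_right_mul_deriv2 (hf : ContinuousOn f (Icc a b))
    (hf' : ∀ t ∈ Ioo a b, HasDerivAt f (f' t) t) (hf'' : ∀ t ∈ Ioo a b, HasDerivAt f' (f'' t) t)
    (hf''_nonneg : ∀ t ∈ Ioo a b, 0 ≤ f'' t) (hr : r ∈ Ioo a b) :
    IntervalIntegrable (fun t => (b - t) * f'' t) volume r b ∧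
      ∫ t in r..b, (b - t) * f'' t = f b - f r - (b - r) * f' r := by
  set F := fun t => (b - t) * f' t + f t
  have hF' : ∀ t ∈ Ioo a b, HasDerivAt F ((b - t) * f'' t) t := fun t ht => by
    refine ((((hasDerivAt_id' t).const_sub b).mul (hf'' t ht)).add (hf' t ht)).congr_deriv ?_
    ring
  have hFb : Tendsto F (𝓝[<] b) (𝓝 (F b)) := by
    have hab : a < b := hr.1.trans hr.2
    have hfb := hf b (right_mem_Icc.2 hab.le)
    simpa [F] using ((convexOn_Icc_of_hasDerivAt2_nonneg hf hf' hf'' hf''_nonneg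
      ).tendsto_sub_mul_deriv_nhdsLT hab hfb hf').add
      (hfb.mono_of_mem_nhdsWithin (Icc_mem_nhdsLT hab))
  have hFc : ContinuousOn F (Icc r b) := by
    intro t ht
    rcases ht.2.eq_or_lt with rfl | htb
    · exact (continuousWithinAt_Iio_iff_Iic.1 hFb).mono Icc_subset_Iic_self
    · exact (hF' t ⟨hr.1.trans_le ht.1, htb⟩).continuousAt.continuousWithinAt
  have hF'r : ∀ t ∈ Ioo r b, HasDerivAt F ((b - t) * f'' t) t :=
    fun t ht => hF' t ⟨hr.1.trans ht.1, ht.2⟩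
  have hint : IntervalIntegrable (fun t => (b - t) * f'' t) volume r b :=
    (intervalIntegrable_iff_integrableOn_Ioc_of_le hr.2.le).2 <|
      intervalIntegral.integrableOn_deriv_of_nonneg hFc hF'r fun t ht =>
        mul_nonneg (sub_nonneg.2 ht.2.le) (hf''_nonneg t ⟨hr.1.trans ht.1, ht.2⟩)
  refine ⟨hint, ?_⟩
  rw [intervalIntegral.integral_eq_sub_of_hasDerivAt_of_le hr.2.le hFc hF'r hint]
  simp only [F, sub_self, zero_mul, zero_add]
  ring

theorem integral_green_mul_deriv2 (hf : ContinuousOn f (Icc a b))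
    (hf' : ∀ t ∈ Ioo a b, HasDerivAt f (f' t) t) (hf'' : ∀ t ∈ Ioo a b, HasDerivAt f' (f'' t) t)
    (hf''_nonneg : ∀ t ∈ Ioo a b, 0 ≤ f'' t) (hr : r ∈ Ioo a b) :
    ∫ q in a..b, (min r q - a) * (b - max r q) * f'' q
      = (r - a) * f b + (b - r) * f a - (b - a) * f r := by
  obtain ⟨hintL, hL⟩ := intervalIntegrable_and_integral_sub_left_mul_deriv2 hf hf' hf'' hf''_nonneg hr
  obtain ⟨hintR, hR⟩ :=
    intervalIntegrable_and_integral_sub_right_mul_deriv2 hf hf' hf'' hf''_nonneg hr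
  have hEqL : EqOn (fun q => (min r q - a) * (b - max r q) * f'' q)
      (fun q => (b - r) * ((q - a) * f'' q)) (uIcc a r) := by
    intro q hq
    rw [uIcc_of_le hr.1.le] at hq
    simp only [min_eq_right hq.2, max_eq_left hq.2]
    ring
  have hEqR : EqOn (fun q => (min r q - a) * (b - max r q) * f'' q)
      (fun q => (r - a) * ((b - q) * f'' q)) (uIcc r b) := by
    intro q hq
    rw [uIcc_of_le hr.2.le] at hq
    simp only [min_eq_left hq.1, max_eq_right hq.1]
    ring
  rw [← intervalIntegral.integral_add_adjacent_intervals
      ((hintL.const_mul (b - r)).congr (hEqL.symm.mono Ioc_subset_Icc_self))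
      ((hintR.const_mul (r - a)).congr (hEqR.symm.mono Ioc_subset_Icc_self)),
    intervalIntegral.integral_congr hEqL, intervalIntegral.integral_congr hEqR,
    intervalIntegral.integral_const_mul, intervalIntegral.integral_const_mul, hL, hR]
  ring

end Green

theorem Real.exp_mul_le_exp_mul_add_exp_mul {a b t : ℝ} (hat : a ≤ t) (htb : t ≤ b) (x : ℝ) :
    exp (t * x) ≤ exp (a * x) + exp (b * x) := by
  rcases le_total 0 x with hx | hx
  · linarith [exp_le_exp.2 (mul_le_mul_of_nonneg_right htb hx), exp_pos (a * x)]
  · linarith [exp_le_exp.2 (mul_le_mul_of_nonpos_right hat hx), exp_pos (b * x)]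

namespace ProbabilityTheory

variable {Ω : Type*} {m : MeasurableSpace Ω} {X : Ω → ℝ} {μ : Measure Ω} {a b v : ℝ}

theorem continuousOn_mgf_Icc (ha : Integrable (fun ω => exp (a * X ω)) μ)
    (hb : Integrable (fun ω => exp (b * X ω)) μ) : ContinuousOn (mgf X μ) (Icc a b) :=
  continuousOn_of_dominated
    (fun t ht => (integrable_exp_mul_of_le_of_le ha hb ht.1 ht.2).aestronglyMeasurable)
    (fun t ht => ae_of_all _ fun ω => by
      rw [norm_of_nonneg (exp_pos _).le]
      exact exp_mul_le_exp_mul_add_exp_mul ht.1 ht.2 (X ω))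
    (ha.add hb) (ae_of_all _ fun ω => (by fun_prop : Continuous fun t => exp (t * X ω)).continuousOn)

theorem continuousOn_cgf_Icc (ha : Integrable (fun ω => exp (a * X ω)) μ)
    (hb : Integrable (fun ω => exp (b * X ω)) μ) : ContinuousOn (cgf X μ) (Icc a b) := by
  rcases eq_zero_or_neZero μ with rfl | hμ
  · rw [cgf_zero_measure]
    exact continuousOn_const
  · exact (continuousOn_mgf_Icc ha hb).log fun t ht =>
      (mgf_pos' (NeZero.ne μ) (integrable_exp_mul_of_le_of_le ha hb ht.1 ht.2)).ne'

theorem Ioo_subset_interior_integrableExpSet (ha : Integrable (fun ω => exp (a * X ω)) μ)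
    (hb : Integrable (fun ω => exp (b * X ω)) μ) : Ioo a b ⊆ interior (integrableExpSet X μ) := by
  rw [← interior_Icc]
  exact interior_mono fun _ ht => integrable_exp_mul_of_le_of_le ha hb ht.1 ht.2

theorem hasDerivAt_cgf (h : v ∈ interior (integrableExpSet X μ)) :
    HasDerivAt (cgf X μ) (deriv (cgf X μ) v) v :=
  (analyticAt_cgf h).differentiableAt.hasDerivAt

theorem hasDerivAt_deriv_cgf (h : v ∈ interior (integrableExpSet X μ)) :
    HasDerivAt (deriv (cgf X μ))
      (μ[fun ω => X ω ^ 2 * exp (v * X ω)] / mgf X μ v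
        - (μ[fun ω => X ω * exp (v * X ω)] / mgf X μ v) ^ 2) v := by
  rw [← deriv_cgf h, ← iteratedDeriv_two_cgf h, iteratedDeriv_succ, iteratedDeriv_one]
  exact (analyticAt_cgf h).deriv.differentiableAt.hasDerivAt

theorem variance_tilted_mul_eq (h : v ∈ interior (integrableExpSet X μ)) :
    Var[X; μ.tilted (v * X ·)]
      = μ[fun ω => X ω ^ 2 * exp (v * X ω)] / mgf X μ v
        - (μ[fun ω => X ω * exp (v * X ω)] / mgf X μ v) ^ 2 := by
  rw [variance_tilted_mul h, iteratedDeriv_two_cgf h, deriv_cgf h]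

end ProbabilityTheory

theorem holder_defect_identity_general
    (Ω : Type) [MeasureSpace Ω] [IsProbabilityMeasure (ℙ : Measure Ω)]
    (X : Ω → ℝ)
    (r s : ℝ) (hr : 0 < r) (hrs : r < s)
    (hint : Integrable (fun ω => Real.exp (s * X ω)) (ℙ : Measure Ω)) :
    Integrable (fun ω => Real.exp (r * X ω)) (ℙ : Measure Ω) ∧
    (r / s) * Real.log (∫ ω, Real.exp (s * X ω) ∂(ℙ : Measure Ω))
        - Real.log (∫ ω, Real.exp (r * X ω) ∂(ℙ : Measure Ω))
      = (1 / s) * ∫ q in (0 : ℝ)..s,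
          min r q * (s - max r q) *
            ((∫ ω, (X ω) ^ 2 * Real.exp (q * X ω) ∂(ℙ : Measure Ω))
                / (∫ ω, Real.exp (q * X ω) ∂(ℙ : Measure Ω))
              - ((∫ ω, X ω * Real.exp (q * X ω) ∂(ℙ : Measure Ω))
                / (∫ ω, Real.exp (q * X ω) ∂(ℙ : Measure Ω))) ^ 2) := by
  have h0 : Integrable (fun ω => exp (0 * X ω)) (ℙ : Measure Ω) := by simp
  have hinterior := Ioo_subset_interior_integrableExpSet h0 hint
  have hgreen := integral_green_mul_deriv2 (continuousOn_cgf_Icc h0 hint)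
    (fun q hq => hasDerivAt_cgf (hinterior hq)) (fun q hq => hasDerivAt_deriv_cgf (hinterior hq))
    (fun q hq => variance_tilted_mul_eq (hinterior hq) ▸ variance_nonneg _ _) ⟨hr, hrs⟩
  refine ⟨integrable_exp_mul_of_nonneg_of_le hint hr.le hrs.le, ?_⟩
  simp only [sub_zero, cgf_zero, mul_zero, add_zero] at hgreen
  simp only [cgf, mgf] at hgreen
  rw [hgreen]
  field_simp [(hr.trans hrs).ne']

/-- if `E[e^{sX}] < ∞` and `0 < r < s`, then `E[e^{rX}] < ∞` and the
defect `h(r,s)` in Hölder's inequality, defined by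
`E[e^{rX}] = e^{-h(r,s)} E[e^{sX}]^{r/s}`, equals
`(1/s) ∫₀^s min(r,q)(s - max(r,q)) Var_q(X) dq`, where `Var_q(X)` is the variance of
`X` under the measure weighted by `e^{qX}`. -/
theorem holder_defect_identity
    (Ω : Type) [MeasureSpace Ω] [IsProbabilityMeasure (ℙ : Measure Ω)]
    (X : Ω → ℝ) (hX : Measurable X)
    (r s : ℝ) (hr : 0 < r) (hrs : r < s)
    (hint : Integrable (fun ω => Real.exp (s * X ω)) (ℙ : Measure Ω)) :
    Integrable (fun ω => Real.exp (r * X ω)) (ℙ : Measure Ω) ∧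
    (r / s) * Real.log (∫ ω, Real.exp (s * X ω) ∂(ℙ : Measure Ω))
        - Real.log (∫ ω, Real.exp (r * X ω) ∂(ℙ : Measure Ω))
      = (1 / s) * ∫ q in (0 : ℝ)..s,
          min r q * (s - max r q) *
            ((∫ ω, (X ω) ^ 2 * Real.exp (q * X ω) ∂(ℙ : Measure Ω))
                / (∫ ω, Real.exp (q * X ω) ∂(ℙ : Measure Ω))
              - ((∫ ω, X ω * Real.exp (q * X ω) ∂(ℙ : Measure Ω))
                / (∫ ω, Real.exp (q * X ω) ∂(ℙ : Measure Ω))) ^ 2) :=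
  holder_defect_identity_general Ω X r s hr hrs hint
end

section
/- Equality case in the Hölder inequality for exponential moments: let X be a real random variable with E[e^{sX}] < ∞ for some s > 0, and let r ∈ (0, s). If E[e^{rX}] = E[e^{sX}]^{r/s}, then X is almost surely equal to a constant. -/
/-!
With `p = r / s ∈ (0, 1)` and `Y = e^{sX}`, the hypothesis reads `E[Y^p] = E[Y]^p`. Since
`t ↦ t^p` is strictly concave on `[0, ∞)`, the equality case of Jensen's inequality forces `Y`,
hence `X = log Y / s`, to be almost surely constant.
-/

open MeasureTheory ProbabilityTheory

section RpowMoments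

variable {α : Type*} [MeasurableSpace α] {μ : Measure α} {f : α → ℝ} {p : ℝ}

theorem MeasureTheory.Integrable.rpow_of_le_one [IsFiniteMeasure μ] (hf : Integrable f μ) (hf0 : 0 ≤ᵐ[μ] f)
    (hp0 : 0 ≤ p) (hp1 : p ≤ 1) : Integrable (fun x => f x ^ p) μ := by
  have hmem : MemLp f (ENNReal.ofReal p) μ :=
    (memLp_one_iff_integrable.2 hf).mono_exponent (ENNReal.ofReal_le_one.2 hp1)
  refine hmem.integrable_norm_rpow'.congr ?_
  filter_upwards [hf0] with x hx
  rw [Real.norm_of_nonneg hx, ENNReal.toReal_ofReal hp0]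

theorem ae_eq_integral_of_integral_rpow_eq [IsProbabilityMeasure μ] (hp0 : 0 < p) (hp1 : p < 1)
    (hf0 : 0 ≤ᵐ[μ] f) (hf : Integrable f μ) (heq : ∫ x, f x ^ p ∂μ = (∫ x, f x ∂μ) ^ p) :
    f =ᵐ[μ] fun _ => ∫ x, f x ∂μ := by
  have hjensen := (Real.strictConcaveOn_rpow hp0 hp1).ae_eq_const_or_lt_map_average
    (Real.continuous_rpow_const hp0.le).continuousOn isClosed_Ici hf0 hf
    (hf.rpow_of_le_one hf0 hp0.le hp1.le)
  simp only [average_eq_integral] at hjensen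
  exact hjensen.resolve_right heq.not_lt

end RpowMoments

theorem holder_equality_case_constant_general
    (Ω : Type) [MeasureSpace Ω] [IsProbabilityMeasure (ℙ : Measure Ω)]
    (X : Ω → ℝ)
    (r s : ℝ) (hr : 0 < r) (hrs : r < s)
    (hint : Integrable (fun ω => Real.exp (s * X ω)) (ℙ : Measure Ω))
    (heq : ∫ ω, Real.exp (r * X ω) ∂(ℙ : Measure Ω)
        = (∫ ω, Real.exp (s * X ω) ∂(ℙ : Measure Ω)) ^ (r / s)) :
    ∃ c : ℝ, ∀ᵐ ω ∂(ℙ : Measure Ω), X ω = c := by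
  have hs : 0 < s := hr.trans hrs
  have hpow : ∀ ω, Real.exp (s * X ω) ^ (r / s) = Real.exp (r * X ω) := fun ω => by
    rw [← Real.exp_mul]
    field_simp
  have hconst := ae_eq_integral_of_integral_rpow_eq (div_pos hr hs) ((div_lt_one hs).2 hrs)
    (.of_forall fun ω => (Real.exp_pos _).le) hint (by simpa only [hpow] using heq)
  refine ⟨Real.log (∫ ω, Real.exp (s * X ω) ∂ℙ) / s, ?_⟩
  filter_upwards [hconst] with ω hω
  rw [← hω, Real.log_exp, mul_div_cancel_left₀ _ hs.ne']

/-- equality case in Hölder's inequality for exponential moments.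
If `E[e^{sX}] < ∞`, `0 < r < s`, and `E[e^{rX}] = E[e^{sX}]^{r/s}`, then `X` is almost
surely constant. -/
theorem holder_equality_case_constant
    (Ω : Type) [MeasureSpace Ω] [IsProbabilityMeasure (ℙ : Measure Ω)]
    (X : Ω → ℝ) (hX : Measurable X)
    (r s : ℝ) (hr : 0 < r) (hrs : r < s)
    (hint : Integrable (fun ω => Real.exp (s * X ω)) (ℙ : Measure Ω))
    (heq : ∫ ω, Real.exp (r * X ω) ∂(ℙ : Measure Ω)
        = (∫ ω, Real.exp (s * X ω) ∂(ℙ : Measure Ω)) ^ (r / s)) :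
    ∃ c : ℝ, ∀ᵐ ω ∂(ℙ : Measure Ω), X ω = c :=
  holder_equality_case_constant_general Ω X r s hr hrs hint heq
end

section
/- Product formula for tridiagonal resolvents: let X be an N×N complex tridiagonal Hermitian matrix with real diagonal entries v_1,…,v_N and complex entries t_k in position (k,k+1) (and conj(t_k) in position (k+1,k)). Let λ ∈ ℝ be such that λ is not an eigenvalue of X nor of any of the top-left principal submatrices X_k for i ≤ k ≤ j-1, where 1 ≤ i < j ≤ N. Then g_N(i,j) = (-1)^{j-i} · ( ∏_{k=i}^{j-1} g_k(k,k) · t_k ) · g_N(j,j), where g_k(a,b) = ⟨e_a, (X_k - λ)⁻¹ e_b⟩ and g_N(a,b) = ⟨e_a, (X - λ)⁻¹ e_b⟩. -/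
/-!
Write `A = X - λ` and `G = A⁻¹`. Rows `0, …, i` of `A` see no column beyond `i + 1`, so the
`(a, j)` entries of `A * G = 1` for `a ≤ i < j` say that the column `(G a j)_{a ≤ i}` solves
`Aᵢ₊₁ w = -G(i+1, j) · t i · eᵢ`, where `Aᵢ₊₁` is the top-left `(i+1) × (i+1)` block. Inverting
`Aᵢ₊₁` gives `G(i, j) = -gᵢ₊₁(i, i) · t i · G(i+1, j)`, and iterating from `i` up to `j` gives
the product.
-/

open MeasureTheory Matrix

/-- The `N × N` tridiagonal Hermitian matrix with diagonal entries `v 0, …, v (N-1)`,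
entries `t k` in position `(k, k+1)` and `conj (t k)` in position `(k+1, k)`.
For `k ≤ N`, `triMatrix k v t` is the top-left `k × k` principal submatrix of
`triMatrix N v t`. -/
noncomputable def triMatrix (N : ℕ) (v : ℕ → ℝ) (t : ℕ → ℂ) :
    Matrix (Fin N) (Fin N) ℂ := fun i j =>
  if (i : ℕ) = j then (v i : ℂ)
  else if (i : ℕ) + 1 = j then t i
  else if (j : ℕ) + 1 = i then (starRingEnd ℂ) (t j)
  else 0

namespace Matrix

variable {R : Type*} [CommRing R] {N m : ℕ}

theorem submatrix_castLE_mulVec_inv_col (A : Matrix (Fin N) (Fin N) R) (hA : IsUnit A)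
    (hm : m < N) (hband : ∀ a b : Fin N, (a : ℕ) < m → m < (b : ℕ) → A a b = 0)
    (j : Fin N) (hj : m ≤ j) :
    A.submatrix (Fin.castLE hm.le) (Fin.castLE hm.le) *ᵥ (fun a => A⁻¹ (Fin.castLE hm.le a) j)
      = -A⁻¹ ⟨m, hm⟩ j • fun a => A (Fin.castLE hm.le a) ⟨m, hm⟩ := by
  funext a
  have hrow : ∑ b, A (Fin.castLE hm.le a) b * A⁻¹ b j = 0 := by
    rw [← mul_apply, mul_nonsing_inv A (A.isUnit_iff_isUnit_det.mp hA),
      one_apply_ne (Fin.ne_of_val_ne (by simp; omega))]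
  obtain ⟨r, rfl⟩ : ∃ r, N = m + 1 + r := ⟨N - (m + 1), by omega⟩
  have htail : ∑ b : Fin r, A (Fin.castLE hm.le a) (Fin.natAdd (m + 1) b)
      * A⁻¹ (Fin.natAdd (m + 1) b) j = 0 :=
    Finset.sum_eq_zero fun b _ => by rw [hband _ _ a.isLt (by simp; omega), zero_mul]
  rw [Fin.sum_univ_add, htail, add_zero, Fin.sum_univ_castSucc] at hrow
  rw [Pi.smul_apply, smul_eq_mul, neg_mul, eq_neg_iff_add_eq_zero, mul_comm]
  exact hrow

theorem inv_col_castLE_eq_of_band (A : Matrix (Fin N) (Fin N) R) (hA : IsUnit A)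
    (hm : m < N) (hband : ∀ a b : Fin N, (a : ℕ) < m → m < (b : ℕ) → A a b = 0)
    (hB : IsUnit (A.submatrix (Fin.castLE hm.le) (Fin.castLE hm.le)))
    (j : Fin N) (hj : m ≤ j) :
    (fun a => A⁻¹ (Fin.castLE hm.le a) j)
      = -A⁻¹ ⟨m, hm⟩ j • ((A.submatrix (Fin.castLE hm.le) (Fin.castLE hm.le))⁻¹ *ᵥ
          fun a => A (Fin.castLE hm.le a) ⟨m, hm⟩) := by
  rw [← mulVec_smul, ← submatrix_castLE_mulVec_inv_col A hA hm hband j hj, mulVec_mulVec,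
    nonsing_inv_mul _ ((isUnit_iff_isUnit_det _).mp hB), one_mulVec]

end Matrix

section Tridiagonal

variable {N : ℕ} (v : ℕ → ℝ) (t : ℕ → ℂ)

theorem triMatrix_sub_smul_one (lam : ℝ) :
    triMatrix N v t - (lam : ℂ) • (1 : Matrix (Fin N) (Fin N) ℂ)
      = triMatrix N (fun n => v n - lam) t := by
  ext a b
  by_cases h : a = b
  · subst h; simp [triMatrix]
  · simp [triMatrix, h, Fin.val_ne_of_ne h]

theorem triMatrix_submatrix_castLE {k : ℕ} (h : k ≤ N) :
    (triMatrix N v t).submatrix (Fin.castLE h) (Fin.castLE h) = triMatrix k v t :=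
  rfl

theorem triMatrix_apply_of_add_one_lt {a b : Fin N} (h : (a : ℕ) + 1 < b) :
    triMatrix N v t a b = 0 := by
  simp only [triMatrix]
  rw [if_neg (by omega), if_neg (by omega), if_neg (by omega)]

theorem triMatrix_col_succ_castLE {k : ℕ} (hk : k + 1 < N) :
    (fun a : Fin (k + 1) => triMatrix N v t (Fin.castLE hk.le a) ⟨k + 1, hk⟩)
      = Pi.single (Fin.last k) (t k) := by
  funext a
  rcases Fin.eq_castSucc_or_eq_last a with ⟨a, rfl⟩ | rfl
  · rw [Pi.single_eq_of_ne (Fin.castSucc_lt_last a).ne, triMatrix_apply_of_add_one_lt]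
    simp
  · simp [triMatrix]

theorem triMatrix_inv_apply_eq_neg_mul {i j : ℕ} (hij : i < j) (hjN : j < N)
    (hA : IsUnit (triMatrix N v t)) (hB : IsUnit (triMatrix (i + 1) v t)) :
    (triMatrix N v t)⁻¹ ⟨i, hij.trans hjN⟩ ⟨j, hjN⟩
      = -((triMatrix (i + 1) v t)⁻¹ (Fin.last i) (Fin.last i) * t i
          * (triMatrix N v t)⁻¹ ⟨i + 1, by omega⟩ ⟨j, hjN⟩) := by
  have hcol := congrFun (inv_col_castLE_eq_of_band (triMatrix N v t) hA
    (m := i + 1) (by omega) (fun a b ha hb => triMatrix_apply_of_add_one_lt v t (by omega))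
    (by rwa [triMatrix_submatrix_castLE]) ⟨j, hjN⟩ hij) (Fin.last i)
  rw [triMatrix_submatrix_castLE, triMatrix_col_succ_castLE, mulVec_single] at hcol
  simp only [Pi.smul_apply, smul_eq_mul, MulOpposite.smul_eq_mul_unop, MulOpposite.unop_op,
    col_apply] at hcol
  rw [show (⟨i, hij.trans hjN⟩ : Fin N) = Fin.castLE (by omega) (Fin.last i) from rfl, hcol]
  ring

theorem triMatrix_inv_apply_eq_prod {i j : ℕ} (hij : i ≤ j) (hjN : j < N)
    (hA : IsUnit (triMatrix N v t))
    (hsub : ∀ k ∈ Finset.Ico i j, IsUnit (triMatrix (k + 1) v t)) :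
    (triMatrix N v t)⁻¹ ⟨i, hij.trans_lt hjN⟩ ⟨j, hjN⟩
      = (-1 : ℂ) ^ (j - i)
        * (∏ k ∈ Finset.Ico i j, (triMatrix (k + 1) v t)⁻¹ (Fin.last k) (Fin.last k) * t k)
        * (triMatrix N v t)⁻¹ ⟨j, hjN⟩ ⟨j, hjN⟩ := by
  induction hij using Nat.decreasingInduction with
  | self => simp
  | of_succ i hij ih =>
    rw [triMatrix_inv_apply_eq_neg_mul v t hij hjN hA (hsub i (Finset.left_mem_Ico.mpr hij)),
      ih fun k hk => hsub k (Finset.Ico_subset_Ico_left i.le_succ hk),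
      Finset.prod_eq_prod_Ico_succ_bot hij, show j - i = j - (i + 1) + 1 by omega, pow_succ]
    ring

end Tridiagonal

-- Indices are 0-based: the paper's `g_k(k,k)` is the `Fin.last k` entry of the resolvent of
-- the `(k+1) × (k+1)` block.
/-- product formula for the resolvent of a tridiagonal Hermitian matrix.
Here indices are 0-based: for `i < j < N`, the `(i,j)` resolvent entry of the full matrix
factors as `(-1)^{j-i}` times the product over `k = i, …, j-1` of the `(k,k)` resolvent
entry of the top-left `(k+1) × (k+1)` principal submatrix times `t k`, times the `(j,j)`
resolvent entry of the full matrix. -/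
theorem tridiagonal_product_formula
    (N : ℕ) (v : ℕ → ℝ) (t : ℕ → ℂ) (lam : ℝ)
    (i j : ℕ) (hij : i < j) (hjN : j < N)
    (hfull : IsUnit (triMatrix N v t - (lam : ℂ) • (1 : Matrix (Fin N) (Fin N) ℂ)))
    (hsub : ∀ k ∈ Finset.Ico i j,
      IsUnit (triMatrix (k + 1) v t - (lam : ℂ) • (1 : Matrix (Fin (k + 1)) (Fin (k + 1)) ℂ))) :
    (triMatrix N v t - (lam : ℂ) • (1 : Matrix (Fin N) (Fin N) ℂ))⁻¹
        ⟨i, lt_trans hij hjN⟩ ⟨j, hjN⟩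
      = (-1 : ℂ) ^ (j - i) *
        (∏ k ∈ Finset.Ico i j,
          ((triMatrix (k + 1) v t - (lam : ℂ) • (1 : Matrix (Fin (k + 1)) (Fin (k + 1)) ℂ))⁻¹
              (Fin.last k) (Fin.last k) * t k)) *
        (triMatrix N v t - (lam : ℂ) • (1 : Matrix (Fin N) (Fin N) ℂ))⁻¹ ⟨j, hjN⟩ ⟨j, hjN⟩ := by
  simp only [triMatrix_sub_smul_one] at hfull hsub ⊢
  exact triMatrix_inv_apply_eq_prod _ t hij.le hjN hfull hsub
end

section
/- Wegner estimate for Wigner blocks: let V be a Wigner block matrix of width W whose diagonal variables d_i have a bounded density h. Then for every Hermitian W×W matrix A and every t > 0: P( ‖(V - A)⁻¹‖ > t·W^{3/2} ) ≤ 2π‖h‖_∞ / t. Moreover, if V₁ and V₂ are two independent Wigner block matrices with the same distribution, then for all Hermitian W×W matrices A, B, every W×W matrix C, and every t > 0: P( ‖M⁻¹‖ > t·W^{3/2} ) ≤ 4π‖h‖_∞ / t, where M is the 2W×2W block matrix with blocks V₁ - A, C in the first block row and C†, V₂ - B in the second (the norm being interpreted as +∞ when the matrix is not invertible). -/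
/-!
If a Hermitian matrix `M` satisfies `‖M⁻¹‖ > c`, one of its eigenvalues lies in `[-1/c, 1/c]`,
and then `Im tr (M - i/c)⁻¹ ≥ c/2`. By Markov's inequality it therefore suffices to bound
`E[Im (M - i/c)⁻¹_jj]` for every index `j`. Seen as a function of the single real parameter `x`
added to the diagonal entry `j`, `Im (M - z)⁻¹_jj` is `π` times a Cauchy density in `x` (a
rank-one perturbation, solved by the resolvent identity), so its Lebesgue integral is `π`. The
diagonal entry `d_j/√W` is independent of the rest of the matrix and has density at most
`√W ‖h‖_∞`, hence each expectation is at most `π √W ‖h‖_∞`, and summing over the `W` indices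
gives the bound. For the block matrix one first conditions on the block not containing `j`,
using the independence of the two Wigner matrices; there are `2W` indices.
-/

open MeasureTheory ProbabilityTheory Matrix
open scoped ENNReal NNReal

/-- Matrices inherit the product measurable structure. -/
instance matrixMeasurableSpace {m n α : Type*} [MeasurableSpace α] :
    MeasurableSpace (Matrix m n α) :=
  inferInstanceAs (MeasurableSpace (m → n → α))

/-- The operator (`ℓ² → ℓ²`) norm of a square complex matrix. -/
noncomputable def opNorm {m : Type*} [Fintype m] [DecidableEq m] (M : Matrix m m ℂ) : ℝ :=
  ‖(Matrix.toEuclideanCLM (𝕜 := ℂ) M : EuclideanSpace ℂ m →L[ℂ] EuclideanSpace ℂ m)‖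

/-- `invNormGT M c` holds when `M` is not invertible or `‖M⁻¹‖ > c` (i.e. the inverse
norm is interpreted as `+∞` for singular matrices). -/
def invNormGT {m : Type*} [Fintype m] [DecidableEq m] (M : Matrix m m ℂ) (c : ℝ) : Prop :=
  ¬ IsUnit M ∨ c < opNorm M⁻¹

/-- The Wigner block matrix of width `W`: `V(i,i) = d i / √W`, for `i < j`,
`V(i,j) = a i j / √W` and `V(j,i) = conj (a i j) / √W`. -/
noncomputable def wignerMatrix (W : ℕ) (d : ℕ → ℝ) (a : ℕ → ℕ → ℂ) :
    Matrix (Fin W) (Fin W) ℂ := fun p q =>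
  if (p : ℕ) = q then ((d p : ℂ) / (Real.sqrt W : ℂ))
  else if (p : ℕ) < q then a p q / (Real.sqrt W : ℂ)
  else (starRingEnd ℂ) (a q p) / (Real.sqrt W : ℂ)

/-- Hypotheses on the entries of a Wigner block matrix: the diagonal variables `d` are
i.i.d. with density `h`, the off-diagonal variables `a` are i.i.d. with density `g`,
centered with a fourth moment, `d` has a second moment, and all the variables are
jointly independent. -/
def WignerHyp (Ω : Type) [MeasureSpace Ω] (d : ℕ → Ω → ℝ) (a : ℕ → ℕ → Ω → ℂ)
    (h : ℝ → ℝ) (g : ℂ → ℝ) : Prop :=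
  (∀ k, Measurable (d k)) ∧ (∀ i j, Measurable (a i j)) ∧
  (∀ k, Measure.map (d k) ℙ
      = (volume : Measure ℝ).withDensity (fun x => ENNReal.ofReal (h x))) ∧
  (∀ i j, Measure.map (a i j) ℙ
      = (volume : Measure ℂ).withDensity (fun z => ENNReal.ofReal (g z))) ∧
  (∀ i j, ∫ ω, a i j ω ∂(ℙ : Measure Ω) = 0) ∧
  (∀ i j, Integrable (fun ω => ‖a i j ω‖ ^ 4) (ℙ : Measure Ω)) ∧
  (∀ k, Integrable (fun ω => (d k ω) ^ 2) (ℙ : Measure Ω)) ∧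
  iIndepFun
    (fun k : ℕ ⊕ (ℕ × ℕ) =>
      Sum.elim (fun i ω => ((d i ω : ℝ) : ℂ)) (fun p ω => a p.1 p.2 ω) k) ℙ

open Complex Real

lemma Complex.im_inv_ofReal_sub (x : ℝ) (z : ℂ) :
    ((x : ℂ) - z)⁻¹.im = z.im / ((x - z.re) ^ 2 + z.im ^ 2) := by
  rw [inv_im, normSq_apply]
  simp only [sub_im, ofReal_im, zero_sub, neg_neg, sub_re, ofReal_re, mul_neg, neg_mul]
  ring

namespace Matrix

section Resolvent

variable {n : Type*} [DecidableEq n]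

lemma IsHermitian.add_single {A : Matrix n n ℂ} (hA : A.IsHermitian) (j : n) (t : ℝ) :
    (A + single j j (t : ℂ)).IsHermitian := by
  refine hA.add (ext fun p q => ?_)
  by_cases hp : p = j <;> by_cases hq : q = j <;> simp [hp, hq, Ne.symm]

variable [Fintype n]

lemma inv_unitary_conj {α : Type*} [CommRing α] [StarRing α] {U : Matrix n n α}
    (hU : U ∈ unitary (Matrix n n α)) (D : Matrix n n α) :
    (U * D * star U)⁻¹ = U * D⁻¹ * star U := by
  rw [mul_inv_rev, mul_inv_rev, inv_eq_left_inv (Unitary.star_mul_self_of_mem hU),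
    inv_eq_left_inv (Unitary.mul_star_self_of_mem hU), mul_assoc]

lemma inv_diagonal_of_ne_zero {v : n → ℂ} (hv : ∀ k, v k ≠ 0) :
    (diagonal v)⁻¹ = diagonal fun k => (v k)⁻¹ :=
  inv_eq_left_inv <| by rw [diagonal_mul_diagonal]; simp [inv_mul_cancel₀ (hv _)]

lemma mul_single_mul_apply_self {α : Type*} [CommRing α] (X Y : Matrix n n α) (j : n) (c : α) :
    (X * single j j c * Y) j j = X j j * c * Y j j := by
  rw [mul_apply, Finset.sum_eq_single j (fun b _ hb => by simp [hb]) (by simp),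
    mul_single_apply_same]

namespace IsHermitian

variable {A : Matrix n n ℂ}

lemma sub_smul_one_eq (hA : A.IsHermitian) (z : ℂ) :
    A - z • 1 = hA.eigenvectorUnitary * diagonal (fun k => (hA.eigenvalues k : ℂ) - z)
      * star (hA.eigenvectorUnitary : Matrix n n ℂ) := by
  set U : Matrix n n ℂ := ↑hA.eigenvectorUnitary
  have hz : U * (z • 1) * star U = z • 1 := by
    rw [mul_smul_comm, mul_one, smul_mul_assoc,
      Unitary.mul_star_self_of_mem hA.eigenvectorUnitary.2]
  conv_lhs => rw [hA.spectral_theorem, Unitary.conjStarAlgAut_apply, ← hz]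
  rw [← sub_mul, ← mul_sub, smul_one_eq_diagonal, diagonal_sub]
  rfl

lemma isUnit_sub_smul_one (hA : A.IsHermitian) {z : ℂ} (hz : ∀ k, (hA.eigenvalues k : ℂ) ≠ z) :
    IsUnit (A - z • 1) := by
  rw [hA.sub_smul_one_eq]
  refine (Unitary.isUnit_coe.mul (isUnit_diagonal.mpr (Pi.isUnit_iff.mpr fun k => ?_))).mul
    (Unitary.isUnit_coe (U := star hA.eigenvectorUnitary))
  exact (sub_ne_zero.mpr (hz k)).isUnit

lemma inv_sub_smul_one_eq (hA : A.IsHermitian) {z : ℂ} (hz : ∀ k, (hA.eigenvalues k : ℂ) ≠ z) :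
    (A - z • 1)⁻¹ = hA.eigenvectorUnitary * diagonal (fun k => ((hA.eigenvalues k : ℂ) - z)⁻¹)
      * star (hA.eigenvectorUnitary : Matrix n n ℂ) := by
  rw [hA.sub_smul_one_eq, inv_unitary_conj hA.eigenvectorUnitary.2,
    inv_diagonal_of_ne_zero fun k => sub_ne_zero.mpr (hz k)]

lemma ofReal_eigenvalues_ne (hA : A.IsHermitian) {z : ℂ} (hz : z.im ≠ 0) (k : n) :
    (hA.eigenvalues k : ℂ) ≠ z :=
  fun h => hz <| by rw [← h, ofReal_im]

lemma trace_inv_sub_smul_one (hA : A.IsHermitian) {z : ℂ} (hz : z.im ≠ 0) :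
    trace (A - z • 1)⁻¹ = ∑ k, ((hA.eigenvalues k : ℂ) - z)⁻¹ := by
  rw [hA.inv_sub_smul_one_eq (hA.ofReal_eigenvalues_ne hz), trace_mul_cycle,
    Unitary.star_mul_self_of_mem hA.eigenvectorUnitary.2, one_mul, trace_diagonal]

lemma inv_sub_smul_one_apply_self (hA : A.IsHermitian) {z : ℂ} (hz : z.im ≠ 0) (j : n) :
    (A - z • 1)⁻¹ j j
      = ∑ k, (normSq (hA.eigenvectorUnitary j k) : ℂ) * ((hA.eigenvalues k : ℂ) - z)⁻¹ := by
  rw [hA.inv_sub_smul_one_eq (hA.ofReal_eigenvalues_ne hz), mul_apply]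
  refine Finset.sum_congr rfl fun k _ => ?_
  rw [mul_diagonal, star_apply, normSq_eq_conj_mul_self]
  simp only [RCLike.star_def]
  ring

lemma sum_normSq_eigenvectorUnitary (hA : A.IsHermitian) (j : n) :
    ∑ k, normSq (hA.eigenvectorUnitary j k) = 1 := by
  have := congrArg (fun M : Matrix n n ℂ => M j j)
    (Unitary.mul_star_self_of_mem hA.eigenvectorUnitary.2)
  simp only [mul_apply, star_apply, one_apply_eq, RCLike.star_def, mul_conj] at this
  exact_mod_cast this

lemma im_inv_sub_smul_one_apply_self_pos (hA : A.IsHermitian) {z : ℂ} (hz : 0 < z.im) (j : n) :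
    0 < ((A - z • 1)⁻¹ j j).im := by
  rw [hA.inv_sub_smul_one_apply_self hz.ne', im_sum]
  obtain ⟨k, hk⟩ : ∃ k, normSq (hA.eigenvectorUnitary j k) ≠ 0 := by
    by_contra! h
    simpa only [h, Finset.sum_const_zero, zero_ne_one] using hA.sum_normSq_eigenvectorUnitary j
  refine Finset.sum_pos' (fun k _ => ?_) ⟨k, Finset.mem_univ k, ?_⟩
  all_goals simp only [im_ofReal_mul, im_inv_ofReal_sub]
  · exact mul_nonneg (normSq_nonneg _) (div_nonneg hz.le (by positivity))
  · exact mul_pos ((normSq_nonneg _).lt_of_ne' hk) (div_pos hz (by positivity))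

lemma one_div_two_mul_im_le_im_trace_inv (hA : A.IsHermitian) {z : ℂ} (hz : 0 < z.im) {k : n}
    (hk : |hA.eigenvalues k - z.re| ≤ z.im) :
    1 / (2 * z.im) ≤ (trace (A - z • 1)⁻¹).im := by
  rw [hA.trace_inv_sub_smul_one hz.ne', im_sum]
  simp only [im_inv_ofReal_sub]
  refine le_trans ?_ (Finset.single_le_sum
    (f := fun k => z.im / ((hA.eigenvalues k - z.re) ^ 2 + z.im ^ 2))
    (fun k _ => div_nonneg hz.le (by positivity)) (Finset.mem_univ k))
  rw [div_le_div_iff₀ (by positivity) (by positivity)]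
  nlinarith [sq_abs (hA.eigenvalues k - z.re), abs_nonneg (hA.eigenvalues k - z.re)]

open scoped Matrix.Norms.L2Operator in
lemma exists_abs_eigenvalues_le_of_invNormGT (hA : A.IsHermitian) {c : ℝ} (hc : 0 < c)
    (h : invNormGT A c) : ∃ k, |hA.eigenvalues k| ≤ c⁻¹ := by
  by_contra! hlt
  have hne : ∀ k, (hA.eigenvalues k : ℂ) ≠ 0 := fun k h0 => by
    simpa [ofReal_eq_zero.mp h0, (inv_pos.mpr hc).not_gt] using hlt k
  have hA0 : A - (0 : ℂ) • 1 = A := by rw [zero_smul, sub_zero]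
  refine h.elim (fun hnu => hnu (hA0 ▸ hA.isUnit_sub_smul_one hne)) fun hlt' => hlt'.not_ge ?_
  change ‖A⁻¹‖ ≤ c
  rw [← hA0, hA.inv_sub_smul_one_eq hne,
    CStarRing.norm_mul_mem_unitary _ (Unitary.star_mem hA.eigenvectorUnitary.2),
    CStarRing.norm_mem_unitary_mul _ hA.eigenvectorUnitary.2, l2_opNorm_diagonal,
    pi_norm_le_iff_of_nonneg hc.le]
  intro k
  rw [sub_zero, norm_inv, norm_real, Real.norm_eq_abs]
  exact inv_le_of_inv_le₀ hc (hlt k).le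

lemma exists_im_inv_add_single_sub_smul_one (hA : A.IsHermitian) {z : ℂ} (hz : 0 < z.im)
    (j : n) : ∃ a b : ℝ, 0 < b ∧ ∀ t : ℝ,
      ((A + single j j (t : ℂ) - z • 1)⁻¹ j j).im = b / ((t - a) ^ 2 + b ^ 2) := by
  set g := (A - z • 1)⁻¹ j j
  have hg : 0 < g.im := hA.im_inv_sub_smul_one_apply_self_pos hz j
  have hg0 : g ≠ 0 := fun h => by simp [h] at hg
  set w := -g⁻¹
  have hw : 0 < w.im := by
    simp only [w, neg_im, inv_im, neg_div, neg_neg]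
    exact div_pos hg (normSq_pos.mpr hg0)
  refine ⟨w.re, w.im, hw, fun t => ?_⟩
  suffices (A + single j j (t : ℂ) - z • 1)⁻¹ j j = ((t : ℂ) - w)⁻¹ by
    rw [this, im_inv_ofReal_sub]
  set G := (A + single j j (t : ℂ) - z • 1)⁻¹ j j
  have hunit := (hA.add_single j t).isUnit_sub_smul_one
    ((hA.add_single j t).ofReal_eigenvalues_ne hz.ne')
  have hresolvent : G - g = -(G * t * g) := by
    rw [add_sub_right_comm] at hunit
    have := congrArg (fun M : Matrix n n ℂ => M j j) (inv_sub_inv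
      (iff_of_true hunit (hA.isUnit_sub_smul_one (hA.ofReal_eigenvalues_ne hz.ne'))))
    simpa only [sub_apply, sub_add_cancel_left, mul_neg, neg_mul, neg_apply,
      mul_single_mul_apply_self, G, add_sub_right_comm] using this
  refine eq_inv_of_mul_eq_one_left (mul_left_cancel₀ hg0 ?_)
  simp only [w]
  linear_combination hresolvent + G * mul_inv_cancel₀ hg0

end IsHermitian

end Resolvent

instance secondCountableTopology {m n α : Type*} [Countable m] [Countable n]
    [TopologicalSpace α] [SecondCountableTopology α] : SecondCountableTopology (Matrix m n α) :=
  inferInstanceAs (SecondCountableTopology (m → n → α))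

instance borelSpace {m n α : Type*} [Countable m] [Countable n] [TopologicalSpace α]
    [MeasurableSpace α] [SecondCountableTopology α] [BorelSpace α] :
    BorelSpace (Matrix m n α) :=
  inferInstanceAs (BorelSpace (m → n → α))

@[fun_prop]
lemma continuous_single {m n α : Type*} [DecidableEq m] [DecidableEq n] [TopologicalSpace α]
    [Zero α] (i : m) (j : n) : Continuous (single i j : α → Matrix m n α) :=
  continuous_pi fun p => continuous_pi fun q => by
    simp only [single_apply]
    split_ifs
    exacts [continuous_id, continuous_const]

variable {n : Type*} [Fintype n] [DecidableEq n]

lemma measurable_inv : Measurable fun M : Matrix n n ℂ => M⁻¹ := by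
  simp_rw [inv_def, Ring.inverse_eq_inv']
  refine measurable_pi_lambda _ fun p => measurable_pi_lambda _ fun q => ?_
  exact (continuous_id.matrix_det.measurable.inv).mul
    (continuous_id.matrix_adjugate.matrix_elem p q).measurable

lemma measurable_ofReal_im_inv_apply (i j : n) :
    Measurable fun M : Matrix n n ℂ => ENNReal.ofReal ((M⁻¹ i j).im) :=
  (ENNReal.continuous_ofReal.comp (continuous_im.comp (continuous_id.matrix_elem i j))).measurable
    |>.comp measurable_inv

end Matrix

lemma lintegral_ofReal_div_sq_add_sq (a : ℝ) {b : ℝ} (hb : 0 < b) :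
    ∫⁻ x, ENNReal.ofReal (b / ((x - a) ^ 2 + b ^ 2)) = ENNReal.ofReal π := by
  have hcauchy : ∀ x, ENNReal.ofReal (b / ((x - a) ^ 2 + b ^ 2))
      = ENNReal.ofReal π * cauchyPDF a b.toNNReal x := fun x => by
    rw [cauchyPDF_def, ← ENNReal.ofReal_mul Real.pi_pos.le, cauchyPDFReal_def,
      Real.coe_toNNReal _ hb.le, ← mul_assoc, ← mul_assoc, mul_inv_cancel₀ Real.pi_pos.ne',
      one_mul, div_eq_mul_inv]
  simp_rw [hcauchy]
  rw [lintegral_const_mul _ (measurable_cauchyPDF _ _),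
    lintegral_cauchyPDF_eq_one _ (by simpa using hb), mul_one]

lemma MeasureTheory.Measure.map_le_smul_volume_of_withDensity {Ω : Type*} [MeasurableSpace Ω]
    {μ : Measure Ω} {X : Ω → ℝ} {h : ℝ → ℝ}
    (hX : μ.map X = volume.withDensity fun x => ENNReal.ofReal (h x)) {C : ℝ}
    (hC : ∀ᵐ x, h x ≤ C) : μ.map X ≤ ENNReal.ofReal C • volume := by
  rw [hX, ← withDensity_const]
  exact withDensity_mono (hC.mono fun x hx => ENNReal.ofReal_le_ofReal hx)

lemma MeasureTheory.Measure.map_div_le_smul_volume {Ω : Type*} [MeasurableSpace Ω]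
    {μ : Measure Ω} {X : Ω → ℝ} (hX : Measurable X) {L : ℝ≥0∞} (hlaw : μ.map X ≤ L • volume)
    {s : ℝ} (hs : 0 < s) : μ.map (fun ω => X ω / s) ≤ (L * ENNReal.ofReal s) • volume := by
  have hdiv : (fun ω => X ω / s) = (fun x => s⁻¹ * x) ∘ X := by
    funext ω
    simp [div_eq_inv_mul]
  rw [hdiv, ← Measure.map_map (measurable_const_mul _) hX]
  refine (Measure.map_mono hlaw (measurable_const_mul _)).trans_eq ?_
  rw [Measure.map_smul, Real.map_volume_mul_left (inv_ne_zero hs.ne'), inv_inv, abs_of_pos hs,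
    smul_smul]

namespace ProbabilityTheory

variable {Ω β γ : Type*} {mΩ : MeasurableSpace Ω} [MeasurableSpace β] [MeasurableSpace γ]
  {μ : Measure Ω}

theorem iIndepFun.indepFun_of_measurable_iSup {ι : Type*} {κ : ι → Type*}
    {m : ∀ i, MeasurableSpace (κ i)} {f : ∀ i, Ω → κ i} (hf : iIndepFun f μ)
    (hmeas : ∀ i, Measurable (f i)) {S T : Set ι} (hST : Disjoint S T) {Y : Ω → β} {X : Ω → γ}
    (hY : Measurable[⨆ i ∈ S, (m i).comap (f i)] Y)
    (hX : Measurable[⨆ i ∈ T, (m i).comap (f i)] X) :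
    IndepFun Y X μ := by
  rw [IndepFun_iff_Indep]
  exact indep_of_indep_of_le_right (indep_of_indep_of_le_left
    (indep_iSup_of_disjoint (fun i => (hmeas i).comap_le) hf.iIndep hST) hY.comap_le) hX.comap_le

variable [IsProbabilityMeasure μ]

theorem IndepFun.lintegral_le_of_forall_le {Y : Ω → β} {X : Ω → γ} (hind : IndepFun Y X μ)
    (hY : Measurable Y) (hX : Measurable X) {F : β × γ → ℝ≥0∞} (hF : Measurable F) {K : ℝ≥0∞}
    (hK : ∀ y, ∫⁻ ω, F (y, X ω) ∂μ ≤ K) :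
    ∫⁻ ω, F (Y ω, X ω) ∂μ ≤ K := by
  have := Measure.isProbabilityMeasure_map (μ := μ) hY.aemeasurable
  rw [← lintegral_map hF (hY.prodMk hX),
    (indepFun_iff_map_prod_eq_prod_map_map hY.aemeasurable hX.aemeasurable).mp hind,
    lintegral_prod _ hF.aemeasurable]
  calc ∫⁻ y, ∫⁻ x, F (y, x) ∂μ.map X ∂μ.map Y ≤ ∫⁻ _, K ∂μ.map Y :=
        lintegral_mono fun y =>
          (lintegral_map (hF.comp measurable_prodMk_left) hX).trans_le (hK y)
    _ = K := by simp

theorem IndepFun.lintegral_im_inv_add_single_sub_smul_one_le {n : Type*} [Fintype n]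
    [DecidableEq n] {Y : Ω → β} {X : Ω → ℝ} (hind : IndepFun Y X μ) (hY : Measurable Y)
    (hX : Measurable X) {L : ℝ≥0∞} (hlaw : μ.map X ≤ L • volume) {Φ : β → Matrix n n ℂ}
    (hΦ : Measurable Φ) (hherm : ∀ y, (Φ y).IsHermitian) {z : ℂ} (hz : 0 < z.im) (j : n) :
    ∫⁻ ω, ENNReal.ofReal (((Φ (Y ω) + single j j (X ω : ℂ) - z • 1)⁻¹ j j).im) ∂μ
      ≤ L * ENNReal.ofReal π := by
  have hperturb : Continuous fun p : Matrix n n ℂ × ℝ => p.1 + single j j (p.2 : ℂ) - z • 1 := by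
    fun_prop
  refine hind.lintegral_le_of_forall_le hY hX ((measurable_ofReal_im_inv_apply j j).comp
    (hperturb.measurable.comp ((hΦ.comp measurable_fst).prodMk measurable_snd))) fun y => ?_
  obtain ⟨a, b, hb, hab⟩ := (hherm y).exists_im_inv_add_single_sub_smul_one hz j
  calc ∫⁻ ω, ENNReal.ofReal (((Φ y + single j j (X ω : ℂ) - z • 1)⁻¹ j j).im) ∂μ
      = ∫⁻ x, ENNReal.ofReal (b / ((x - a) ^ 2 + b ^ 2)) ∂μ.map X := by
        rw [lintegral_map (by fun_prop) hX]
        simp only [hab]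
    _ ≤ ∫⁻ x, ENNReal.ofReal (b / ((x - a) ^ 2 + b ^ 2)) ∂(L • volume) :=
        lintegral_mono' hlaw le_rfl
    _ = L * ENNReal.ofReal π := by
        rw [lintegral_smul_measure, lintegral_ofReal_div_sq_add_sq a hb, smul_eq_mul]

end ProbabilityTheory

theorem measure_invNormGT_le {Ω : Type*} [MeasurableSpace Ω] (μ : Measure Ω)
    {n : Type*} [Fintype n] [DecidableEq n] {M : Ω → Matrix n n ℂ} (hM : Measurable M)
    (hherm : ∀ ω, (M ω).IsHermitian) {c : ℝ} (hc : 0 < c) {K : ℝ}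
    (hK : ∀ j, ∫⁻ ω, ENNReal.ofReal (((M ω - ((c⁻¹ : ℝ) * I : ℂ) • 1)⁻¹ j j).im) ∂μ
      ≤ ENNReal.ofReal K) :
    μ {ω | invNormGT (M ω) c} ≤ ENNReal.ofReal (2 * Fintype.card n * K / c) := by
  set z : ℂ := (c⁻¹ : ℝ) * I
  have hz : 0 < z.im := by simpa [z] using hc
  set f : Ω → ℝ≥0∞ := fun ω => ∑ j, ENNReal.ofReal (((M ω - z • 1)⁻¹ j j).im)
  have hf : ∀ j, Measurable fun ω => ENNReal.ofReal (((M ω - z • 1)⁻¹ j j).im) := fun j =>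
    (measurable_ofReal_im_inv_apply j j).comp ((continuous_sub_right _).measurable.comp hM)
  have hbad : {ω | invNormGT (M ω) c} ⊆ {ω | ENNReal.ofReal (c / 2) ≤ f ω} := fun ω hω => by
    obtain ⟨k, hk⟩ := (hherm ω).exists_abs_eigenvalues_le_of_invNormGT hc hω
    have htrace := (hherm ω).one_div_two_mul_im_le_im_trace_inv hz (k := k) (by simpa [z] using hk)
    rw [trace, im_sum] at htrace
    simp only [Set.mem_ofPred_eq, f, ← ENNReal.ofReal_sum_of_nonneg fun j _ =>
      ((hherm ω).im_inv_sub_smul_one_apply_self_pos hz j).le]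
    refine ENNReal.ofReal_le_ofReal (le_trans (le_of_eq ?_) htrace)
    simp [z, div_eq_mul_inv]
  calc μ {ω | invNormGT (M ω) c} ≤ μ {ω | ENNReal.ofReal (c / 2) ≤ f ω} := measure_mono hbad
    _ ≤ (∫⁻ ω, f ω ∂μ) / ENNReal.ofReal (c / 2) :=
        meas_ge_le_lintegral_div (Finset.measurable_sum _ fun j _ => hf j).aemeasurable
          (by simpa using hc) ENNReal.ofReal_ne_top
    _ ≤ (Fintype.card n * ENNReal.ofReal K) / ENNReal.ofReal (c / 2) := by
        gcongr
        rw [lintegral_finsetSum _ fun j _ => hf j]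
        exact (Finset.sum_le_sum fun j _ => hK j).trans_eq (by simp)
    _ = ENNReal.ofReal (2 * Fintype.card n * K / c) := by
        rw [← ENNReal.ofReal_natCast, ← ENNReal.ofReal_mul (Nat.cast_nonneg _),
          ← ENNReal.ofReal_div_of_pos (by positivity)]
        congr 1
        field_simp

lemma Matrix.fromBlocks_add_single_inl {m n α : Type*} [DecidableEq m] [DecidableEq n]
    [AddZeroClass α] (A : Matrix m m α) (B : Matrix m n α) (C : Matrix n m α) (D : Matrix n n α)
    (i : m) (x : α) :
    fromBlocks (A + single i i x) B C D = fromBlocks A B C D + single (.inl i) (.inl i) x := by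
  ext (p | p) (q | q) <;> simp [single_apply]

lemma Matrix.fromBlocks_add_single_inr {m n α : Type*} [DecidableEq m] [DecidableEq n]
    [AddZeroClass α] (A : Matrix m m α) (B : Matrix m n α) (C : Matrix n m α) (D : Matrix n n α)
    (i : n) (x : α) :
    fromBlocks A B C (D + single i i x) = fromBlocks A B C D + single (.inr i) (.inr i) x := by
  ext (p | p) (q | q) <;> simp [single_apply]

lemma wignerMatrix_isHermitian (W : ℕ) (d : ℕ → ℝ) (a : ℕ → ℕ → ℂ) :
    (wignerMatrix W d a).IsHermitian := by
  refine ext fun p q => ?_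
  simp only [conjTranspose_apply, wignerMatrix, RCLike.star_def]
  rcases lt_trichotomy (p : ℕ) q with hpq | hpq | hpq
  · simp [hpq, hpq.ne', hpq.not_gt, hpq.ne, map_div₀]
  · simp [Fin.ext hpq, map_div₀]
  · simp [hpq, hpq.ne', hpq.not_gt, hpq.ne, map_div₀]

lemma continuous_wignerMatrix (W : ℕ) :
    Continuous fun p : (ℕ → ℝ) × (ℕ → ℕ → ℂ) => wignerMatrix W p.1 p.2 := by
  refine continuous_pi fun p => continuous_pi fun q => ?_
  simp only [wignerMatrix]
  split_ifs <;> fun_prop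

lemma wignerMatrix_eq_update_add_single (W : ℕ) (d : ℕ → ℝ) (a : ℕ → ℕ → ℂ) (i : Fin W) :
    wignerMatrix W d a
      = wignerMatrix W (Function.update d i 0) a + single i i ((d i / √W : ℝ) : ℂ) := by
  refine ext fun p q => ?_
  rcases eq_or_ne p i with rfl | hp
  · rcases eq_or_ne q p with rfl | hq
    · simp [wignerMatrix]
    · simp [wignerMatrix, Ne.symm hq, Fin.val_ne_of_ne hq.symm]
  · simp [wignerMatrix, Fin.val_ne_of_ne hp, Ne.symm hp]

namespace WignerHyp

variable {Ω : Type} [MeasureSpace Ω] {d d' : ℕ → Ω → ℝ} {a a' : ℕ → ℕ → Ω → ℂ}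
  {h : ℝ → ℝ} {g : ℂ → ℝ}

lemma measurable_data (hw : WignerHyp Ω d a h g) :
    Measurable fun ω => ((fun k => d k ω), (fun p q => a p q ω)) :=
  (measurable_pi_lambda _ hw.1).prodMk
    (measurable_pi_lambda _ fun p => measurable_pi_lambda _ fun q => hw.2.1 p q)

lemma indepFun_update_data (hw : WignerHyp Ω d a h g) (i : ℕ) :
    IndepFun (fun ω => (Function.update (fun k => d k ω) i 0, fun p q => a p q ω)) (d i) := by
  obtain ⟨hd, ha, -, -, -, -, -, hind⟩ := hw
  generalize hF : (fun k : ℕ ⊕ (ℕ × ℕ) =>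
    Sum.elim (fun i ω => ((d i ω : ℝ) : ℂ)) (fun p ω => a p.1 p.2 ω) k) = F at hind
  have hFd : ∀ k, d k = fun ω => (F (Sum.inl k) ω).re := fun k => by
    subst hF
    exact funext fun ω => (ofReal_re _).symm
  have hFa : ∀ p q, a p q = F (Sum.inr (p, q)) := fun p q => by
    subst hF
    rfl
  have hcoord : ∀ {S : Set (ℕ ⊕ (ℕ × ℕ))} {k}, k ∈ S →
      Measurable[⨆ l ∈ S, MeasurableSpace.comap (F l) inferInstance] (F k) := fun hk =>
    (comap_measurable _).mono
      (le_iSup₂ (f := fun l (_ : l ∈ _) => MeasurableSpace.comap (F l) inferInstance) _ hk) le_rfl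
  have hF : ∀ k, Measurable (F k) := Sum.forall.2
    ⟨fun k => by subst hF; exact (hd k).complex_ofReal, fun p => hFa p.1 p.2 ▸ ha p.1 p.2⟩
  have hY : Measurable[⨆ l ∈ ({Sum.inl i}ᶜ : Set (ℕ ⊕ (ℕ × ℕ))),
      MeasurableSpace.comap (F l) inferInstance]
      (fun ω => (Function.update (fun k => d k ω) i 0, fun p q => a p q ω)) := by
    -- makes the instance-implicit `measurable_pi_lambda` work for this sub-σ-algebra
    let _ : MeasurableSpace Ω := ⨆ l ∈ ({Sum.inl i}ᶜ : Set (ℕ ⊕ (ℕ × ℕ))),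
      MeasurableSpace.comap (F l) inferInstance
    refine Measurable.prodMk (measurable_pi_lambda _ fun k => ?_)
      (measurable_pi_lambda _ fun p => measurable_pi_lambda _ fun q =>
        hFa p q ▸ hcoord (Set.mem_compl_singleton_iff.mpr Sum.inr_ne_inl))
    by_cases hk : k = i
    · simp only [hk, Function.update_self, measurable_const]
    · simp only [Function.update_of_ne hk]
      exact hFd k ▸ measurable_re.comp
        (hcoord (Set.mem_compl_singleton_iff.mpr fun h => hk (Sum.inl_injective h)))
  exact hind.indepFun_of_measurable_iSup hF disjoint_compl_left hY
    (hFd i ▸ measurable_re.comp (hcoord rfl))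

variable [IsProbabilityMeasure (ℙ : Measure Ω)] {Ch : ℝ} {W : ℕ}

theorem lintegral_im_inv_sub_smul_one_le (hw : WignerHyp Ω d a h g) (hCh : ∀ᵐ x, h x ≤ Ch)
    (hW : 0 < W) {n : Type*} [Fintype n] [DecidableEq n]
    {Ψ : Matrix (Fin W) (Fin W) ℂ → Matrix n n ℂ} (hΨ : Measurable Ψ)
    (hherm : ∀ m, m.IsHermitian → (Ψ m).IsHermitian) (i : Fin W) (j : n)
    (hadd : ∀ m x, Ψ (m + single i i x) = Ψ m + single j j x) {z : ℂ} (hz : 0 < z.im) :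
    ∫⁻ ω, ENNReal.ofReal
        (((Ψ (wignerMatrix W (fun k => d k ω) (fun p q => a p q ω)) - z • 1)⁻¹ j j).im)
      ≤ ENNReal.ofReal (Ch * √W * π) := by
  have hs : 0 < √(W : ℝ) := Real.sqrt_pos.mpr (Nat.cast_pos.mpr hW)
  have hlaw := Measure.map_div_le_smul_volume (hw.1 i)
    (Measure.map_le_smul_volume_of_withDensity (hw.2.2.1 i) hCh) hs
  have hupdate : Measurable fun p : (ℕ → ℝ) × (ℕ → ℕ → ℂ) => (Function.update p.1 i 0, p.2) :=
    (measurable_update'.comp (measurable_fst.prodMk measurable_const)).prodMk measurable_snd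
  have := ((hw.indepFun_update_data i).comp measurable_id (measurable_id.div_const √(W : ℝ))
    ).lintegral_im_inv_add_single_sub_smul_one_le (hupdate.comp hw.measurable_data)
    ((hw.1 i).div_const _) hlaw (hΨ.comp (continuous_wignerMatrix W).measurable)
    (fun p => hherm _ (wignerMatrix_isHermitian W p.1 p.2)) hz j
  rw [ENNReal.ofReal_mul' Real.pi_pos.le, ENNReal.ofReal_mul' hs.le]
  simpa only [Function.comp_apply, id, ← hadd, ← wignerMatrix_eq_update_add_single] using this

theorem measure_invNormGT_sub_le (hw : WignerHyp Ω d a h g) (hCh : ∀ᵐ x, h x ≤ Ch) (hW : 0 < W)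
    {A : Matrix (Fin W) (Fin W) ℂ} (hA : A.IsHermitian) {c : ℝ} (hc : 0 < c) :
    ℙ {ω | invNormGT (wignerMatrix W (fun k => d k ω) (fun p q => a p q ω) - A) c}
      ≤ ENNReal.ofReal (2 * W * (Ch * √W * π) / c) := by
  simpa using measure_invNormGT_le ℙ ((continuous_sub_right A).measurable.comp
      ((continuous_wignerMatrix W).measurable.comp hw.measurable_data))
    (fun ω => (wignerMatrix_isHermitian W _ _).sub hA) hc fun i =>
    hw.lintegral_im_inv_sub_smul_one_le hCh hW (continuous_sub_right A).measurable
      (fun m hm => hm.sub hA) i i (fun m x => add_sub_right_comm m _ A) (by simpa using hc)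

theorem measure_invNormGT_fromBlocks_le (hw : WignerHyp Ω d a h g)
    (hw' : WignerHyp Ω d' a' h g)
    (hind : IndepFun (fun ω => ((fun k => d k ω), (fun i j => a i j ω)))
      (fun ω => ((fun k => d' k ω), (fun i j => a' i j ω))))
    (hCh : ∀ᵐ x, h x ≤ Ch) (hW : 0 < W) {A B : Matrix (Fin W) (Fin W) ℂ} (hA : A.IsHermitian)
    (hB : B.IsHermitian) (C : Matrix (Fin W) (Fin W) ℂ) {c : ℝ} (hc : 0 < c) :
    ℙ {ω | invNormGT (fromBlocks (wignerMatrix W (fun k => d k ω) (fun p q => a p q ω) - A) C Cᴴ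
        (wignerMatrix W (fun k => d' k ω) (fun p q => a' p q ω) - B)) c}
      ≤ ENNReal.ofReal (2 * (2 * W) * (Ch * √W * π) / c) := by
  set z : ℂ := (c⁻¹ : ℝ) * I
  have hz : 0 < z.im := by simpa [z] using hc
  set blocks : Matrix (Fin W) (Fin W) ℂ × Matrix (Fin W) (Fin W) ℂ →
      Matrix (Fin W ⊕ Fin W) (Fin W ⊕ Fin W) ℂ := fun m => fromBlocks (m.1 - A) C Cᴴ (m.2 - B)
  have hblocks : Continuous blocks := by fun_prop
  have hherm : ∀ {m₁ m₂}, m₁.IsHermitian → m₂.IsHermitian → (blocks (m₁, m₂)).IsHermitian :=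
    fun h₁ h₂ => (h₁.sub hA).fromBlocks rfl (h₂.sub hB)
  have hwig := (continuous_wignerMatrix W).measurable
  have hF : ∀ k, Measurable fun m => ENNReal.ofReal (((blocks m - z • 1)⁻¹ k k).im) := fun k =>
    (measurable_ofReal_im_inv_apply k k).comp
      ((continuous_sub_right _).measurable.comp hblocks.measurable)
  refine (measure_invNormGT_le ℙ (hblocks.measurable.comp
      ((hwig.comp hw.measurable_data).prodMk (hwig.comp hw'.measurable_data)))
    (fun ω => hherm (wignerMatrix_isHermitian W _ _) (wignerMatrix_isHermitian W _ _)) hc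
    (K := Ch * √W * π) ?_).trans_eq (by simp [two_mul])
  rintro (i | i)
  · exact hind.symm.lintegral_le_of_forall_le hw'.measurable_data hw.measurable_data
      (F := fun q => ENNReal.ofReal (((blocks (wignerMatrix W q.2.1 q.2.2,
        wignerMatrix W q.1.1 q.1.2) - z • 1)⁻¹ (.inl i) (.inl i)).im))
      ((hF _).comp ((hwig.comp measurable_snd).prodMk (hwig.comp measurable_fst))) fun q =>
      hw.lintegral_im_inv_sub_smul_one_le hCh hW (Ψ := fun m => blocks (m, wignerMatrix W q.1 q.2))
        (hblocks.measurable.comp (measurable_id.prodMk measurable_const))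
        (fun m hm => hherm hm (wignerMatrix_isHermitian W _ _)) i (.inl i)
        (fun m x => by simp only [blocks, add_sub_right_comm m, fromBlocks_add_single_inl]) hz
  · exact hind.lintegral_le_of_forall_le hw.measurable_data hw'.measurable_data
      (F := fun q => ENNReal.ofReal (((blocks (wignerMatrix W q.1.1 q.1.2,
        wignerMatrix W q.2.1 q.2.2) - z • 1)⁻¹ (.inr i) (.inr i)).im))
      ((hF _).comp ((hwig.comp measurable_fst).prodMk (hwig.comp measurable_snd))) fun q =>
      hw'.lintegral_im_inv_sub_smul_one_le hCh hW (Ψ := fun m => blocks (wignerMatrix W q.1 q.2, m))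
        (hblocks.measurable.comp (measurable_const.prodMk measurable_id))
        (fun m hm => hherm (wignerMatrix_isHermitian W _ _) hm) i (.inr i)
        (fun m x => by simp only [blocks, add_sub_right_comm m, fromBlocks_add_single_inr]) hz

end WignerHyp

theorem wigner_block_wegner_general
    (W : ℕ) (hW : 1 ≤ W)
    (Ω : Type) [MeasureSpace Ω] [IsProbabilityMeasure (ℙ : Measure Ω)]
    (h : ℝ → ℝ) (g : ℂ → ℝ)
    (Ch : ℝ) (hCh : ∀ᵐ x ∂(volume : Measure ℝ), h x ≤ Ch)
    (d d' : ℕ → Ω → ℝ) (a a' : ℕ → ℕ → Ω → ℂ)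
    (hw : WignerHyp Ω d a h g) (hw' : WignerHyp Ω d' a' h g)
    -- the two Wigner matrices are independent
    (hpairindep : IndepFun
      (fun ω => ((fun k => d k ω), (fun i j => a i j ω)))
      (fun ω => ((fun k => d' k ω), (fun i j => a' i j ω))) ℙ) :
    -- single-block Wegner estimate
    (∀ A : Matrix (Fin W) (Fin W) ℂ, A.IsHermitian → ∀ t : ℝ, 0 < t →
      (ℙ : Measure Ω) {ω |
          invNormGT (wignerMatrix W (fun k => d k ω) (fun p q => a p q ω) - A)
            (t * (W : ℝ) ^ ((3 : ℝ) / 2))}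
        ≤ ENNReal.ofReal (2 * Real.pi * Ch / t)) ∧
    -- two-block Wegner estimate
    (∀ A B : Matrix (Fin W) (Fin W) ℂ, A.IsHermitian → B.IsHermitian →
      ∀ C : Matrix (Fin W) (Fin W) ℂ, ∀ t : ℝ, 0 < t →
      (ℙ : Measure Ω) {ω |
          invNormGT
            (Matrix.fromBlocks
              (wignerMatrix W (fun k => d k ω) (fun p q => a p q ω) - A) C Cᴴ
              (wignerMatrix W (fun k => d' k ω) (fun p q => a' p q ω) - B))
            (t * (W : ℝ) ^ ((3 : ℝ) / 2))}
        ≤ ENNReal.ofReal (4 * Real.pi * Ch / t)) := by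
  have hW' : (0 : ℝ) < W := Nat.cast_pos.mpr hW
  have hs : 0 < √(W : ℝ) := Real.sqrt_pos.mpr hW'
  have hpow : (W : ℝ) ^ ((3 : ℝ) / 2) = W * √W := by
    rw [Real.sqrt_eq_rpow, ← Real.rpow_one_add' hW'.le (by norm_num)]
    norm_num
  have hc : ∀ {t : ℝ}, 0 < t → 0 < t * (W : ℝ) ^ ((3 : ℝ) / 2) := fun ht => by positivity
  refine ⟨fun A hA t ht => (hw.measure_invNormGT_sub_le hCh hW hA (hc ht)).trans_eq ?_,
    fun A B hA hB C t ht =>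
      (hw.measure_invNormGT_fromBlocks_le hw' hpairindep hCh hW hA hB C (hc ht)).trans_eq ?_⟩
  · rw [hpow]
    congr 1
    field_simp
  · rw [hpow]
    congr 1
    field_simp
    ring

/-- Wegner estimate for Wigner blocks. -/
theorem wigner_block_wegner
    (W : ℕ) (hW : 1 ≤ W)
    (Ω : Type) [MeasureSpace Ω] [IsProbabilityMeasure (ℙ : Measure Ω)]
    (h : ℝ → ℝ) (g : ℂ → ℝ) (hh0 : ∀ x, 0 ≤ h x) (hg0 : ∀ z, 0 ≤ g z)
    (hgbdd : ∃ Cg : ℝ, ∀ z, g z ≤ Cg)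
    (Ch : ℝ) (hCh : ∀ᵐ x ∂(volume : Measure ℝ), h x ≤ Ch)
    (d d' : ℕ → Ω → ℝ) (a a' : ℕ → ℕ → Ω → ℂ)
    (hw : WignerHyp Ω d a h g) (hw' : WignerHyp Ω d' a' h g)
    -- the two Wigner matrices are independent
    (hpairindep : IndepFun
      (fun ω => ((fun k => d k ω), (fun i j => a i j ω)))
      (fun ω => ((fun k => d' k ω), (fun i j => a' i j ω))) ℙ) :
    -- single-block Wegner estimate
    (∀ A : Matrix (Fin W) (Fin W) ℂ, A.IsHermitian → ∀ t : ℝ, 0 < t →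
      (ℙ : Measure Ω) {ω |
          invNormGT (wignerMatrix W (fun k => d k ω) (fun p q => a p q ω) - A)
            (t * (W : ℝ) ^ ((3 : ℝ) / 2))}
        ≤ ENNReal.ofReal (2 * Real.pi * Ch / t)) ∧
    -- two-block Wegner estimate
    (∀ A B : Matrix (Fin W) (Fin W) ℂ, A.IsHermitian → B.IsHermitian →
      ∀ C : Matrix (Fin W) (Fin W) ℂ, ∀ t : ℝ, 0 < t →
      (ℙ : Measure Ω) {ω |
          invNormGT
            (Matrix.fromBlocks
              (wignerMatrix W (fun k => d k ω) (fun p q => a p q ω) - A) C Cᴴ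
              (wignerMatrix W (fun k => d' k ω) (fun p q => a' p q ω) - B))
            (t * (W : ℝ) ^ ((3 : ℝ) / 2))}
        ≤ ENNReal.ofReal (4 * Real.pi * Ch / t)) :=
  wigner_block_wegner_general W hW Ω h g Ch hCh d d' a a' hw hw' hpairindep
end

section
/- Fluctuation regularity for Hölder log-densities: let α ∈ (0,1], C < ∞, and let h: ℝ → (0,∞) and g: ℂ → (0,∞) be probability densities such that ln h and ln g are uniformly Hölder continuous with exponent α and constant C (i.e., |ln h(x) - ln h(y)| ≤ C|x-y|^α and similarly for g). For a complex Hermitian W×W matrix V write d_i = √W·V(i,i) and a_{i,j} = √W·V(i,j) for i < j, and set ρ(V) = ∏_{i=1}^W h(d_i) · ∏_{1 ≤ i < j ≤ W} g(a_{i,j}). Let ζ = 2/α + 1/2. Then for every ε > 0 and all Hermitian W×W matrices V, V₁, V₂ with ‖V₁ - V‖ ≤ ε·W^{-ζ} and ‖V₂ - V‖ ≤ ε·W^{-ζ}: ρ(V₁)/ρ(V₂) ≥ exp(-c·ε^α), where c = 2^{1+α}·C. -/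
open Matrix

/-- The product density `ρ(V) = ∏ᵢ h(dᵢ) ∏_{i<j} g(a_{ij})` of a Wigner-type matrix,
written in the rescaled entries `dᵢ = √W V(i,i)` and `a_{ij} = √W V(i,j)`. -/
noncomputable def wignerDensity (W : ℕ) (h : ℝ → ℝ) (g : ℂ → ℝ)
    (V : Matrix (Fin W) (Fin W) ℂ) : ℝ :=
  (∏ i : Fin W, h (Real.sqrt W * (V i i).re)) *
    ∏ p ∈ Finset.univ.filter (fun p : Fin W × Fin W => p.1 < p.2),
      g ((Real.sqrt W : ℂ) * V p.1 p.2)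

/-! The operator norm dominates every entry, so all entries of `V₁ - V₂` are at most
`2εW^{-ζ}` in modulus. After rescaling by `√W` each of the at most `2W²` log-factors of `ρ`
moves by at most `C (2ε)^α W^{-2}`, because `(√W · W^{-ζ})^α = W^{-2}` is exactly what the
choice `ζ = 2/α + 1/2` is made for; summing gives `2^{1+α} C ε^α`. -/

open Real Finset

lemma norm_apply_le_opNorm {m : Type*} [Fintype m] [DecidableEq m] (M : Matrix m m ℂ) (i j : m) :
    ‖M i j‖ ≤ opNorm M := by
  let T : EuclideanSpace ℂ m →L[ℂ] EuclideanSpace ℂ m := toEuclideanCLM (𝕜 := ℂ) M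
  calc ‖M i j‖ = ‖T (EuclideanSpace.single j 1) i‖ := by
        simp [T, mulVec_single]
    _ ≤ ‖T (EuclideanSpace.single j 1)‖ := PiLp.norm_apply_le _ i
    _ ≤ ‖T‖ * ‖EuclideanSpace.single j (1 : ℂ)‖ := T.le_opNorm _
    _ = opNorm M := by simp [opNorm, T]

lemma opNorm_sub_le_add {m : Type*} [Fintype m] [DecidableEq m] (A B C : Matrix m m ℂ) :
    opNorm (A - B) ≤ opNorm (A - C) + opNorm (B - C) := by
  unfold opNorm
  rw [← sub_sub_sub_cancel_right A B C, map_sub]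
  exact norm_sub_le _ _

lemma exp_neg_le_div_of_abs_log_sub_le {a b t : ℝ} (ha : 0 < a) (hb : 0 < b)
    (h : |log a - log b| ≤ t) : exp (-t) ≤ a / b := by
  rw [← exp_log (div_pos ha hb), log_div ha.ne' hb.ne']
  exact exp_le_exp.2 (by linarith [neg_abs_le (log a - log b)])

lemma exp_neg_card_mul_le_prod_div_prod {ι : Type*} (s : Finset ι) {u v : ι → ℝ} {K : ℝ}
    (h : ∀ i ∈ s, exp (-K) ≤ u i / v i) :
    exp (-(#s * K)) ≤ (∏ i ∈ s, u i) / ∏ i ∈ s, v i := by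
  rw [← prod_div_distrib, neg_mul_eq_mul_neg, exp_nat_mul, ← prod_const]
  exact prod_le_prod (fun _ _ ↦ (exp_pos _).le) h

lemma exp_neg_le_wignerDensity_div {W : ℕ} {h : ℝ → ℝ} {g : ℂ → ℝ} {α C r : ℝ}
    (hα : 0 ≤ α) (hC : 0 ≤ C) (hr : 0 ≤ r) (hh : ∀ x, 0 < h x) (hg : ∀ z, 0 < g z)
    (hHolh : ∀ x y : ℝ, |log (h x) - log (h y)| ≤ C * |x - y| ^ α)
    (hHolg : ∀ z w : ℂ, |log (g z) - log (g w)| ≤ C * ‖z - w‖ ^ α)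
    {V₁ V₂ : Matrix (Fin W) (Fin W) ℂ} (hV : ∀ i j, ‖V₁ i j - V₂ i j‖ ≤ r) :
    exp (-(2 * W ^ 2 * (C * (√W * r) ^ α))) ≤ wignerDensity W h g V₁ / wignerDensity W h g V₂ := by
  have hdiag (i : Fin W) : exp (-(C * (√W * r) ^ α)) ≤ h (√W * (V₁ i i).re) / h (√W * (V₂ i i).re) := by
    refine exp_neg_le_div_of_abs_log_sub_le (hh _) (hh _) ((hHolh _ _).trans ?_)
    rw [← mul_sub, ← Complex.sub_re, abs_mul, abs_of_nonneg (sqrt_nonneg _)]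
    gcongr
    exact (Complex.abs_re_le_norm _).trans (hV i i)
  have hoff (p : Fin W × Fin W) :
      exp (-(C * (√W * r) ^ α)) ≤ g (√W * V₁ p.1 p.2) / g (√W * V₂ p.1 p.2) := by
    refine exp_neg_le_div_of_abs_log_sub_le (hg _) (hg _) ((hHolg _ _).trans ?_)
    rw [← mul_sub, norm_mul, Complex.norm_real, norm_of_nonneg (sqrt_nonneg _)]
    gcongr
    exact hV _ _
  set K := C * (√W * r) ^ α
  set F := univ.filter fun p : Fin W × Fin W ↦ p.1 < p.2
  have hcount : ((W : ℝ) + #F) * K ≤ 2 * W ^ 2 * K := by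
    have hF : #F ≤ W * W := (card_filter_le _ _).trans (by simp)
    have hWF : (W : ℝ) + #F ≤ 2 * W ^ 2 := by
      norm_cast
      nlinarith [Nat.le_mul_self W]
    exact mul_le_mul_of_nonneg_right hWF (by positivity)
  calc exp (-(2 * W ^ 2 * K)) ≤ exp (-(W * K)) * exp (-(#F * K)) := by
        rw [← exp_add]; exact exp_le_exp.2 (by linarith)
    _ ≤ wignerDensity W h g V₁ / wignerDensity W h g V₂ := by
        have hd := exp_neg_card_mul_le_prod_div_prod univ fun i _ ↦ hdiag i
        rw [card_univ, Fintype.card_fin] at hd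
        rw [wignerDensity, wignerDensity, mul_div_mul_comm]
        exact mul_le_mul hd (exp_neg_card_mul_le_prod_div_prod F fun p _ ↦ hoff p)
          (exp_pos _).le ((exp_pos _).le.trans hd)

lemma sqrt_mul_rpow_neg_rpow {x : ℝ} (hx : 0 ≤ x) {α : ℝ} (hα : α ≠ 0) :
    (√x * x ^ (-(2 / α + 1 / 2))) ^ α = x ^ (-2 : ℝ) := by
  rw [sqrt_eq_rpow, ← rpow_add' hx (by simpa using hα), ← rpow_mul hx]
  congr 1
  field_simp
  ring

lemma sq_mul_rpow_neg_two_le_one {x : ℝ} (hx : 0 ≤ x) : x ^ 2 * x ^ (-2 : ℝ) ≤ 1 := by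
  rw [rpow_neg hx, rpow_two]
  exact mul_inv_le_one

theorem holder_density_fluctuation_regular_general
    (α C : ℝ) (hα : 0 < α) (hC : 0 ≤ C)
    (h : ℝ → ℝ) (g : ℂ → ℝ) (hh : ∀ x, 0 < h x) (hg : ∀ z, 0 < g z)
    (hHolh : ∀ x y : ℝ, |Real.log (h x) - Real.log (h y)| ≤ C * |x - y| ^ α)
    (hHolg : ∀ z w : ℂ, |Real.log (g z) - Real.log (g w)| ≤ C * ‖z - w‖ ^ α)
    (W : ℕ) (ε : ℝ) (hε : 0 < ε)
    (V V₁ V₂ : Matrix (Fin W) (Fin W) ℂ)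
    (h₁ : opNorm (V₁ - V) ≤ ε * (W : ℝ) ^ (-(2 / α + 1 / 2)))
    (h₂ : opNorm (V₂ - V) ≤ ε * (W : ℝ) ^ (-(2 / α + 1 / 2))) :
    Real.exp (-((2 : ℝ) ^ (1 + α) * C) * ε ^ α)
      ≤ wignerDensity W h g V₁ / wignerDensity W h g V₂ := by
  set δ := ε * (W : ℝ) ^ (-(2 / α + 1 / 2))
  have hentry (i j : Fin W) : ‖V₁ i j - V₂ i j‖ ≤ 2 * δ := by
    calc ‖V₁ i j - V₂ i j‖ ≤ opNorm (V₁ - V₂) := norm_apply_le_opNorm (V₁ - V₂) i j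
      _ ≤ opNorm (V₁ - V) + opNorm (V₂ - V) := opNorm_sub_le_add _ _ _
      _ ≤ 2 * δ := by linarith
  refine le_trans (exp_le_exp.2 ?_) (exp_neg_le_wignerDensity_div hα.le hC (by positivity)
    hh hg hHolh hHolg hentry)
  have hscale : (√W * (2 * δ)) ^ α = (2 : ℝ) ^ α * ε ^ α * (W : ℝ) ^ (-2 : ℝ) := by
    rw [show √W * (2 * δ) = 2 * ε * (√W * (W : ℝ) ^ (-(2 / α + 1 / 2))) by ring,
      mul_rpow (by positivity) (by positivity), mul_rpow zero_le_two hε.le,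
      sqrt_mul_rpow_neg_rpow W.cast_nonneg hα.ne']
  have hsq := sq_mul_rpow_neg_two_le_one W.cast_nonneg
  rw [hscale, rpow_add zero_lt_two, rpow_one]
  have : 0 ≤ C * (2 : ℝ) ^ α * ε ^ α := by positivity
  nlinarith

/-- Fluctuation regularity for Hölder log-densities: if `ln h` and `ln g`
are uniformly `α`-Hölder with constant `C` and `ζ = 2/α + 1/2`, then for Hermitian
matrices `V₁, V₂` within distance `ε W^{-ζ}` of `V`, the density ratio satisfies
`ρ(V₁)/ρ(V₂) ≥ exp(-2^{1+α} C ε^α)`. -/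
theorem holder_density_fluctuation_regular
    (α C : ℝ) (hα : 0 < α) (hα1 : α ≤ 1) (hC : 0 ≤ C)
    (h : ℝ → ℝ) (g : ℂ → ℝ) (hh : ∀ x, 0 < h x) (hg : ∀ z, 0 < g z)
    (hHolh : ∀ x y : ℝ, |Real.log (h x) - Real.log (h y)| ≤ C * |x - y| ^ α)
    (hHolg : ∀ z w : ℂ, |Real.log (g z) - Real.log (g w)| ≤ C * ‖z - w‖ ^ α)
    (W : ℕ) (hW : 1 ≤ W) (ε : ℝ) (hε : 0 < ε)
    (V V₁ V₂ : Matrix (Fin W) (Fin W) ℂ)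
    (hV : V.IsHermitian) (hV₁ : V₁.IsHermitian) (hV₂ : V₂.IsHermitian)
    (h₁ : opNorm (V₁ - V) ≤ ε * (W : ℝ) ^ (-(2 / α + 1 / 2)))
    (h₂ : opNorm (V₂ - V) ≤ ε * (W : ℝ) ^ (-(2 / α + 1 / 2))) :
    Real.exp (-((2 : ℝ) ^ (1 + α) * C) * ε ^ α)
      ≤ wignerDensity W h g V₁ / wignerDensity W h g V₂ :=
  holder_density_fluctuation_regular_general α C hα hC h g hh hg hHolh hHolg W ε hε V V₁ V₂ h₁ h₂
end

section
/- Conditional exponential bound: let (Σ_j)_{j=1}^n be σ-algebras of events on a probability space and (U_j)_{j=1}^n nonnegative random variables such that for every j, U_j is measurable with respect to Σ_k for every k ≠ j. Suppose there are δ > 0 and p₀ ∈ (0,1] such that for each j, almost surely the conditional probability P(U_j ≥ δ | Σ_j) ≥ p₀. Then E[ exp(-∑_{j=1}^n U_j) ] ≤ exp( -(1 - e^{-δ}) · p₀ · n ). -/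
open MeasureTheory ProbabilityTheory

noncomputable def indic {Ω : Type} (S : Set Ω) : Ω → ℝ := S.indicator fun _ => (1 : ℝ)

def geSet {Ω : Type} (U : Ω → ℝ) (δ : ℝ) : Set Ω := {ω | δ ≤ U ω}

/-!
Since `exp (-u) ≤ 1 - (1 - e^{-δ}) 𝟙{u ≥ δ}` for `u ≥ 0`, and a sum of the `U j` with `j ≠ k`
is `Σ_k`-measurable, pulling it out of the conditional expectation given `Σ_k` shows that adding
the term `U k` to such a sum multiplies `E[exp (-sum)]` by at most `1 - (1 - e^{-δ}) p₀`. Adding the `n` terms one at a time gives the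
bound `(1 - (1 - e^{-δ}) p₀)^n ≤ exp (-(1 - e^{-δ}) p₀ n)`.
-/

lemma exp_neg_le_one_sub_mul_indic {Ω : Type} {U : Ω → ℝ} {ω : Ω} (hU : 0 ≤ U ω) (δ : ℝ) :
    Real.exp (-U ω) ≤ 1 - (1 - Real.exp (-δ)) * indic (geSet U δ) ω := by
  by_cases h : δ ≤ U ω
  · simp [indic, geSet, h]
  · simpa [indic, geSet, h] using hU

lemma one_sub_exp_neg_mul_le_one {δ p : ℝ} (hδ : 0 ≤ δ) (hp : p ≤ 1) :
    (1 - Real.exp (-δ)) * p ≤ 1 := by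
  have hc : 0 ≤ 1 - Real.exp (-δ) := by simpa using hδ
  calc (1 - Real.exp (-δ)) * p ≤ (1 - Real.exp (-δ)) * 1 := by gcongr
    _ ≤ 1 := by linarith [Real.exp_pos (-δ)]

section

variable {Ω : Type} {m m₀ : MeasurableSpace Ω} {μ : Measure Ω}

lemma integrable_of_le_condExp [NeZero μ] {f : Ω → ℝ} {p : ℝ} (hp : 0 < p)
    (h : ∀ᵐ ω ∂μ, p ≤ μ[f | m] ω) : Integrable f μ := by
  by_contra hf
  rw [condExp_of_not_integrable hf] at h
  obtain ⟨ω, hω⟩ := h.exists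
  exact hp.not_ge hω

lemma mul_integral_le_integral_mul_of_le_condExp [IsFiniteMeasure μ] (hm : m ≤ m₀)
    {X g : Ω → ℝ} (hX : StronglyMeasurable[m] X) (hX0 : 0 ≤ᵐ[μ] X) {R : ℝ}
    (hXR : ∀ᵐ ω ∂μ, ‖X ω‖ ≤ R) (hg : Integrable g μ) {p : ℝ}
    (hp : ∀ᵐ ω ∂μ, p ≤ μ[g | m] ω) :
    p * ∫ ω, X ω ∂μ ≤ ∫ ω, X ω * g ω ∂μ := by
  have hpull : μ[X * g | m] =ᵐ[μ] X * μ[g | m] :=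
    condExp_stronglyMeasurable_mul_of_bound hm hX hg R hXR
  have hXint : Integrable X μ := .of_bound (hX.mono hm).aestronglyMeasurable R hXR
  calc p * ∫ ω, X ω ∂μ = ∫ ω, p * X ω ∂μ := (integral_const_mul p X).symm
    _ ≤ ∫ ω, (X * μ[g | m]) ω ∂μ := by
      refine integral_mono_ae (hXint.const_mul p) (integrable_condExp.congr hpull) ?_
      filter_upwards [hp, hX0] with ω hpω hXω
      simpa [mul_comm] using mul_le_mul_of_nonneg_left hpω hXω
    _ = ∫ ω, (X * g) ω ∂μ := by
      rw [← integral_congr_ae hpull, integral_condExp hm]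

lemma integral_mul_exp_neg_le [IsFiniteMeasure μ] (hm : m ≤ m₀) {X V : Ω → ℝ}
    (hX : StronglyMeasurable[m] X) (hX0 : ∀ ω, 0 ≤ X ω) {R : ℝ} (hXR : ∀ ω, X ω ≤ R)
    (hV : ∀ ω, 0 ≤ V ω) {δ p : ℝ} (hδ : 0 ≤ δ) (hp1 : p ≤ 1)
    (hint : Integrable (indic (geSet V δ)) μ)
    (hp : ∀ᵐ ω ∂μ, p ≤ μ[indic (geSet V δ) | m] ω) :
    ∫ ω, X ω * Real.exp (-V ω) ∂μ ≤ (1 - (1 - Real.exp (-δ)) * p) * ∫ ω, X ω ∂μ := by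
  set c := 1 - Real.exp (-δ)
  set g := indic (geSet V δ)
  have hc : 0 ≤ c := by simpa [c] using hδ
  have hcp : 0 ≤ 1 - c * p := sub_nonneg.2 (one_sub_exp_neg_mul_le_one hδ hp1)
  have hXbound : ∀ᵐ ω ∂μ, ‖X ω‖ ≤ R :=
    ae_of_all _ fun ω => (Real.norm_of_nonneg (hX0 ω)).trans_le (hXR ω)
  have hXint : Integrable X μ := .of_bound (hX.mono hm).aestronglyMeasurable R hXbound
  have hXgint : Integrable (fun ω => X ω * g ω) μ :=
    hint.bdd_mul (hX.mono hm).aestronglyMeasurable hXbound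
  by_cases hLint : Integrable (fun ω => X ω * Real.exp (-V ω)) μ
  swap
  · rw [integral_undef hLint]
    exact mul_nonneg hcp (integral_nonneg hX0)
  calc ∫ ω, X ω * Real.exp (-V ω) ∂μ ≤ ∫ ω, X ω - c * (X ω * g ω) ∂μ := by
        refine integral_mono hLint (hXint.sub (hXgint.const_mul c)) fun ω => ?_
        have := mul_le_mul_of_nonneg_left (exp_neg_le_one_sub_mul_indic (hV ω) δ) (hX0 ω)
        dsimp only
        linarith
    _ = ∫ ω, X ω ∂μ - c * ∫ ω, X ω * g ω ∂μ := by
        rw [integral_sub hXint (hXgint.const_mul c), integral_const_mul]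
    _ ≤ ∫ ω, X ω ∂μ - c * (p * ∫ ω, X ω ∂μ) := by
        gcongr
        exact mul_integral_le_integral_mul_of_le_condExp hm hX (ae_of_all _ hX0) hXbound hint hp
    _ = (1 - c * p) * ∫ ω, X ω ∂μ := by ring

lemma integral_exp_neg_sum_le_pow [IsProbabilityMeasure μ] {ι : Type*}
    (sig : ι → MeasurableSpace Ω) (hsig : ∀ j, sig j ≤ m₀) (U : ι → Ω → ℝ)
    (hU0 : ∀ j ω, 0 ≤ U j ω) (hUmeas : ∀ j k, k ≠ j → Measurable[sig k] (U j))
    {δ p : ℝ} (hδ : 0 ≤ δ) (hp1 : p ≤ 1) (hint : ∀ j, Integrable (indic (geSet (U j) δ)) μ)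
    (hcond : ∀ j, ∀ᵐ ω ∂μ, p ≤ μ[indic (geSet (U j) δ) | sig j] ω) (s : Finset ι) :
    ∫ ω, Real.exp (-∑ j ∈ s, U j ω) ∂μ ≤ (1 - (1 - Real.exp (-δ)) * p) ^ s.card := by
  induction s using Finset.cons_induction with
  | empty => simp
  | cons k t hk ih =>
    have hsplit : ∀ ω, Real.exp (-∑ j ∈ Finset.cons k t hk, U j ω)
        = Real.exp (-∑ j ∈ t, U j ω) * Real.exp (-U k ω) := fun ω => by
      rw [Finset.sum_cons, neg_add, Real.exp_add, mul_comm]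
    have hXmeas : Measurable[sig k] fun ω => Real.exp (-∑ j ∈ t, U j ω) :=
      (Finset.measurable_sum t fun j hj => hUmeas j k fun h => hk (h ▸ hj)).neg.exp
    have hX1 : ∀ ω, Real.exp (-∑ j ∈ t, U j ω) ≤ 1 := fun ω =>
      Real.exp_le_one_iff.2 (neg_nonpos.2 (Finset.sum_nonneg fun j _ => hU0 j ω))
    have hcp : 0 ≤ 1 - (1 - Real.exp (-δ)) * p := sub_nonneg.2 (one_sub_exp_neg_mul_le_one hδ hp1)
    simp_rw [hsplit]
    calc _ ≤ (1 - (1 - Real.exp (-δ)) * p) * ∫ ω, Real.exp (-∑ j ∈ t, U j ω) ∂μ :=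
          integral_mul_exp_neg_le (hsig k) hXmeas.stronglyMeasurable (fun ω => (Real.exp_pos _).le)
            hX1 (hU0 k) hδ hp1 (hint k) (hcond k)
      _ ≤ (1 - (1 - Real.exp (-δ)) * p) ^ (Finset.cons k t hk).card := by
          rw [Finset.card_cons, pow_succ']
          gcongr

end

/-- Conditional exponential bound: if each `U j ≥ 0` is measurable with
respect to `sig k` for every `k ≠ j`, and `P(U j ≥ δ | Σ j) ≥ p₀` almost surely, then
`E[exp(-∑ U j)] ≤ exp(-(1 - e^{-δ}) p₀ n)`. -/
theorem conditional_exponential_bound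
    (Ω : Type) [MeasureSpace Ω] [IsProbabilityMeasure (ℙ : Measure Ω)]
    (n : ℕ) (sig : Fin n → MeasurableSpace Ω) (hsig : ∀ j, sig j ≤ (inferInstance : MeasurableSpace Ω))
    (U : Fin n → Ω → ℝ) (hU0 : ∀ j ω, 0 ≤ U j ω)
    (hUmeas : ∀ j k, k ≠ j → Measurable[sig k] (U j))
    (δ p₀ : ℝ) (hδ : 0 < δ) (hp₀ : 0 < p₀) (hp₀1 : p₀ ≤ 1)
    (hcond : ∀ j, ∀ᵐ ω ∂(ℙ : Measure Ω),
      p₀ ≤ ((ℙ : Measure Ω)[indic (geSet (U j) δ) | sig j]) ω) :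
    ∫ ω, Real.exp (-(∑ j, U j ω)) ∂(ℙ : Measure Ω)
      ≤ Real.exp (-(1 - Real.exp (-δ)) * p₀ * n) := by
  have hint j : Integrable (indic (geSet (U j) δ)) ℙ := integrable_of_le_condExp hp₀ (hcond j)
  have hcp : 0 ≤ 1 - (1 - Real.exp (-δ)) * p₀ :=
    sub_nonneg.2 (one_sub_exp_neg_mul_le_one hδ.le hp₀1)
  calc _ ≤ (1 - (1 - Real.exp (-δ)) * p₀) ^ n := by
        simpa using integral_exp_neg_sum_le_pow sig hsig U hU0 hUmeas hδ.le hp₀1 hint hcond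
          Finset.univ
    _ ≤ Real.exp (-((1 - Real.exp (-δ)) * p₀)) ^ n := by
        gcongr
        exact Real.one_sub_le_exp_neg _
    _ = Real.exp (-(1 - Real.exp (-δ)) * p₀ * n) := by
        rw [← Real.exp_nat_mul]
        ring_nf
end
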